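/- arXiv:1103.3584 — 6 statements merged into one kernel-verified Lean document; each statement's English description precedes it below -/
import Mathlib

section
/- The graph HS(2k,k) is vertex transitive: for any two vertices v,w there is an automorphism of HS(2k,k) mapping v to w. -/
abbrev hsVert (n k : ℕ) : Type := {v : Finset ℕ // v ⊆ Finset.Icc 1 n ∧ v.card = k}

/-- The hyper-star graph `HS(n,k)` on the `k`-subsets of `X = {1,...,n}`:
`v, w` are adjacent iff `|v ∩ w| = k-1` and exactly one of `v, w` contains `1`. -/
def HS (n k : ℕ) : SimpleGraph (hsVert n k) :=
  SimpleGraph.fromRel (fun v w =>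
    (v.1 ∩ w.1).card = k - 1 ∧ 1 ∈ v.1 ∧ 1 ∉ w.1)

section Aux

variable {k : ℕ}

private lemma hsCardX : (Finset.Icc 1 (2*k)).card = 2*k := by
  rw [Nat.card_Icc]; omega

/-- The graph automorphism of `HS(2k,k)` induced by a permutation of `ℕ` that
fixes `1` and preserves `{1,...,2k}`. -/
noncomputable def hsPermIso (σ : Equiv.Perm ℕ)
    (hX : ∀ x ∈ Finset.Icc 1 (2*k), σ x ∈ Finset.Icc 1 (2*k))
    (hX' : ∀ x ∈ Finset.Icc 1 (2*k), σ.symm x ∈ Finset.Icc 1 (2*k))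
    (h1 : σ 1 = 1) : HS (2*k) k ≃g HS (2*k) k := by
  classical
  have hmem1 : ∀ s : Finset ℕ, (1 ∈ s.image σ ↔ 1 ∈ s) := by
    intro s
    constructor
    · rintro h
      obtain ⟨x, hx, hσx⟩ := Finset.mem_image.mp h
      have : x = 1 := σ.injective (by rw [hσx, h1])
      rwa [this] at hx
    · intro h
      exact Finset.mem_image.mpr ⟨1, h, h1⟩
  refine ⟨⟨fun v => ⟨v.1.image σ, ?_, ?_⟩, fun v => ⟨v.1.image σ.symm, ?_, ?_⟩, ?_, ?_⟩, ?_⟩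
  · intro y hy
    obtain ⟨x, hx, rfl⟩ := Finset.mem_image.mp hy
    exact hX x (v.2.1 hx)
  · rw [Finset.card_image_of_injective _ σ.injective, v.2.2]
  · intro y hy
    obtain ⟨x, hx, rfl⟩ := Finset.mem_image.mp hy
    exact hX' x (v.2.1 hx)
  · rw [Finset.card_image_of_injective _ σ.symm.injective, v.2.2]
  · intro v
    apply Subtype.ext
    simp [Finset.image_image, Function.comp_def]
  · intro v
    apply Subtype.ext
    simp [Finset.image_image, Function.comp_def]
  · intro a b
    have hinj : ∀ s t : Finset ℕ, (s.image σ ∩ t.image σ) = (s ∩ t).image σ := by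
      intro s t
      exact (Finset.image_inter s t σ.injective).symm
    dsimp only [Equiv.coe_fn_mk]
    constructor
    · rintro ⟨hne, h⟩
      refine ⟨fun hab => hne (by rw [hab]), ?_⟩
      rcases h with ⟨hc, h1a, h1b⟩ | ⟨hc, h1a, h1b⟩
      · rw [hinj, Finset.card_image_of_injective _ σ.injective] at hc
        rw [hmem1] at h1a h1b
        exact Or.inl ⟨hc, h1a, h1b⟩
      · rw [hinj, Finset.card_image_of_injective _ σ.injective] at hc
        rw [hmem1] at h1a h1b
        exact Or.inr ⟨hc, h1a, h1b⟩
    · rintro ⟨hne, h⟩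
      refine ⟨fun hab => hne (Subtype.ext (by
        have := congrArg Subtype.val hab
        dsimp at this
        have := congrArg (Finset.image σ.symm) this
        simpa [Finset.image_image, Function.comp_def] using this)), ?_⟩
      rcases h with ⟨hc, h1a, h1b⟩ | ⟨hc, h1a, h1b⟩
      · exact Or.inl ⟨by rw [hinj, Finset.card_image_of_injective _ σ.injective]; exact hc,
          (hmem1 _).mpr h1a, fun h => h1b ((hmem1 _).mp h)⟩
      · exact Or.inr ⟨by rw [hinj, Finset.card_image_of_injective _ σ.injective]; exact hc,
          (hmem1 _).mpr h1a, fun h => h1b ((hmem1 _).mp h)⟩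

/-- The complementation automorphism of `HS(2k,k)`. -/
def hsComplIso (hk : 1 ≤ k) : HS (2*k) k ≃g HS (2*k) k := by
  classical
  set X := Finset.Icc 1 (2*k) with hXdef
  have hcard : ∀ v : hsVert (2*k) k, (X \ v.1).card = k := by
    intro v
    rw [Finset.card_sdiff_of_subset v.2.1, hsCardX, v.2.2]
    omega
  have hinv : ∀ v : hsVert (2*k) k, X \ (X \ v.1) = v.1 := by
    intro v
    rw [sdiff_sdiff_right_self, Finset.inf_eq_inter,
      Finset.inter_eq_right.mpr v.2.1]
  have h1X : (1 : ℕ) ∈ X := Finset.mem_Icc.mpr ⟨le_refl 1, by omega⟩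
  have hmem1 : ∀ v : hsVert (2*k) k, (1 ∈ X \ v.1 ↔ 1 ∉ v.1) := by
    intro v
    simp [Finset.mem_sdiff, h1X]
  have hic : ∀ a b : hsVert (2*k) k,
      ((X \ a.1) ∩ (X \ b.1)).card = (a.1 ∩ b.1).card := by
    intro a b
    have h1 : (X \ a.1) ∩ (X \ b.1) = X \ (a.1 ∪ b.1) := by
      rw [Finset.sdiff_union_distrib]
    have hsub : a.1 ∪ b.1 ⊆ X := Finset.union_subset a.2.1 b.2.1
    have h2 : (a.1 ∪ b.1).card + (a.1 ∩ b.1).card = k + k := by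
      rw [Finset.card_union_add_card_inter, a.2.2, b.2.2]
    have h3 : (a.1 ∩ b.1).card ≤ a.1.card := Finset.card_le_card Finset.inter_subset_left
    have ha := a.2.2
    rw [h1, Finset.card_sdiff_of_subset hsub, hsCardX]
    omega
  refine ⟨⟨fun v => ⟨X \ v.1, Finset.sdiff_subset, hcard v⟩,
    fun v => ⟨X \ v.1, Finset.sdiff_subset, hcard v⟩, ?_, ?_⟩, ?_⟩
  · intro v; exact Subtype.ext (hinv v)
  · intro v; exact Subtype.ext (hinv v)
  · intro a b
    dsimp only [Equiv.coe_fn_mk]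
    constructor
    · rintro ⟨hne, h⟩
      refine ⟨fun hab => hne (by rw [hab]), ?_⟩
      rcases h with ⟨hc, h1a, h1b⟩ | ⟨hc, h1a, h1b⟩
      · rw [hic] at hc
        rw [hmem1] at h1a h1b
        push_neg at h1b
        exact Or.inr ⟨by rwa [Finset.inter_comm], h1b, h1a⟩
      · rw [hic] at hc
        rw [hmem1] at h1a h1b
        push_neg at h1b
        exact Or.inl ⟨by rwa [Finset.inter_comm], h1b, h1a⟩
    · rintro ⟨hne, h⟩
      have hne' : (⟨X \ a.1, Finset.sdiff_subset, hcard a⟩ : hsVert (2*k) k) ≠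
          ⟨X \ b.1, Finset.sdiff_subset, hcard b⟩ := by
        intro hab
        apply hne
        apply Subtype.ext
        have := congrArg Subtype.val hab
        dsimp at this
        rw [← hinv a, ← hinv b, this]
      refine ⟨hne', ?_⟩
      rcases h with ⟨hc, h1a, h1b⟩ | ⟨hc, h1a, h1b⟩
      · exact Or.inr ⟨by rw [hic, Finset.inter_comm]; exact hc,
          (hmem1 b).mpr h1b, by rw [hmem1]; push_neg; exact h1a⟩
      · exact Or.inl ⟨by rw [hic, Finset.inter_comm]; exact hc,
          (hmem1 a).mpr h1b, by rw [hmem1]; push_neg; exact h1a⟩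

/-- For a vertex containing `1`, there is a permutation of `ℕ` fixing `1`,
preserving `X`, and mapping the vertex onto `{1,...,k}`. -/
private lemma exists_perm (hk : 1 ≤ k) (v : hsVert (2*k) k) (h1v : 1 ∈ v.1) :
    ∃ σ : Equiv.Perm ℕ,
      (∀ x ∈ Finset.Icc 1 (2*k), σ x ∈ Finset.Icc 1 (2*k)) ∧
      (∀ x ∈ Finset.Icc 1 (2*k), σ.symm x ∈ Finset.Icc 1 (2*k)) ∧
      σ 1 = 1 ∧ v.1.image σ = Finset.Icc 1 k := by
  classical
  set X := Finset.Icc 1 (2*k) with hXdef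
  set w : Finset ℕ := Finset.Icc 1 k with hwdef
  have hwX : w ⊆ X := Finset.Icc_subset_Icc_right (by omega)
  have hwcard : w.card = k := by rw [hwdef, Nat.card_Icc]; omega
  have h1w : (1 : ℕ) ∈ w := Finset.mem_Icc.mpr ⟨le_refl 1, hk⟩
  -- an equivalence between the coercions, fixing 1
  have hcards : v.1.card = w.card := by rw [v.2.2, hwcard]
  let e0 : ↥v.1 ≃ ↥w := Finset.equivOfCardEq hcards
  let e1 : ↥v.1 ≃ ↥w := e0.trans (Equiv.swap (e0 ⟨1, h1v⟩) ⟨1, h1w⟩)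
  have he1 : e1 ⟨1, h1v⟩ = ⟨1, h1w⟩ := by
    simp [e1, Equiv.swap_apply_left]
  -- lift to subtypes of ↥X
  let E : {x : ↥X // ↑x ∈ v.1} ≃ {x : ↥X // ↑x ∈ w} :=
    ((Equiv.subtypeSubtypeEquivSubtype (fun {x} hx => v.2.1 hx)).trans e1).trans
      (Equiv.subtypeSubtypeEquivSubtype (fun {x} hx => hwX hx)).symm
  have hE : ∀ (x : {x : ↥X // ↑x ∈ v.1}), ((E x : ↥X) : ℕ) ∈ w := fun x => (by
    have := ((Equiv.subtypeSubtypeEquivSubtype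
      (q := fun x : ℕ => x ∈ w) (fun {x} hx => hwX hx)).symm
      (e1 ((Equiv.subtypeSubtypeEquivSubtype (fun {x} hx => v.2.1 hx)) x))).2
    exact this)
  have hE1 : ((E ⟨⟨1, hwX h1w⟩, h1v⟩ : ↥X) : ℕ) = 1 := by
    have h1 : (Equiv.subtypeSubtypeEquivSubtype (fun {x} hx => v.2.1 hx))
        (⟨⟨1, hwX h1w⟩, h1v⟩ : {x : ↥X // ↑x ∈ v.1}) = ⟨1, h1v⟩ := rfl
    show ((Equiv.subtypeSubtypeEquivSubtype (fun {x} hx => hwX hx)).symm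
      (e1 ((Equiv.subtypeSubtypeEquivSubtype (fun {x} hx => v.2.1 hx))
        ⟨⟨1, hwX h1w⟩, h1v⟩)) : ↥X).1 = 1
    rw [h1, he1]
    rfl
  let P : Equiv.Perm ↥X := E.extendSubtype
  let σ : Equiv.Perm ℕ := P.extendDomain (Equiv.refl {x : ℕ // x ∈ X})
  have hσmem : ∀ x (hx : x ∈ X), σ x = ((P ⟨x, hx⟩ : ↥X) : ℕ) := by
    intro x hx
    have := P.extendDomain_apply_subtype (Equiv.refl {x : ℕ // x ∈ X}) hx
    simpa using this
  have hσX : ∀ x ∈ X, σ x ∈ X := by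
    intro x hx
    rw [hσmem x hx]
    exact (P ⟨x, hx⟩).2
  have hσnot : ∀ x, x ∉ X → σ x = x := by
    intro x hx
    exact P.extendDomain_apply_not_subtype (Equiv.refl {x : ℕ // x ∈ X}) hx
  have hσX' : ∀ x ∈ X, σ.symm x ∈ X := by
    intro x hx
    by_contra hxn
    have := hσnot _ hxn
    rw [Equiv.apply_symm_apply] at this
    exact hxn (this ▸ hx)
  have hP1 : P ⟨1, hwX h1w⟩ = ⟨1, hwX h1w⟩ := by
    have := E.extendSubtype_apply_of_mem ⟨1, hwX h1w⟩ h1v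
    rw [this]
    exact Subtype.ext hE1
  have hσ1 : σ 1 = 1 := by
    rw [hσmem 1 (hwX h1w), hP1]
  have hPv : ∀ x (hx : x ∈ X), x ∈ v.1 → ((P ⟨x, hx⟩ : ↥X) : ℕ) ∈ w := by
    intro x hx hxv
    have h := E.extendSubtype_apply_of_mem ⟨x, hx⟩ hxv
    rw [h]
    exact hE _
  refine ⟨σ, hσX, hσX', hσ1, ?_⟩
  apply Finset.eq_of_subset_of_card_le
  · intro y hy
    obtain ⟨x, hx, rfl⟩ := Finset.mem_image.mp hy
    have hxX : x ∈ X := v.2.1 hx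
    rw [hσmem x hxX]
    exact hPv x hxX hx
  · rw [Finset.card_image_of_injective _ σ.injective, v.2.2, hwcard]

/-- Every vertex can be mapped to the base vertex `{1,...,k}`. -/
private lemma exists_to_base (hk : 1 ≤ k) (v : hsVert (2*k) k) :
    ∃ g : HS (2*k) k ≃g HS (2*k) k,
      g v = ⟨Finset.Icc 1 k, Finset.Icc_subset_Icc_right (by omega),
        by rw [Nat.card_Icc]; omega⟩ := by
  classical
  by_cases h1v : 1 ∈ v.1
  · obtain ⟨σ, hσX, hσX', hσ1, himg⟩ := exists_perm hk v h1v
    refine ⟨hsPermIso σ hσX hσX' hσ1, ?_⟩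
    exact Subtype.ext himg
  · -- apply complementation first
    let c := hsComplIso (k := k) hk
    have h1cv : 1 ∈ (c v).1 := by
      show 1 ∈ Finset.Icc 1 (2*k) \ v.1
      rw [Finset.mem_sdiff]
      exact ⟨Finset.mem_Icc.mpr ⟨le_refl 1, by omega⟩, h1v⟩
    obtain ⟨σ, hσX, hσX', hσ1, himg⟩ := exists_perm hk (c v) h1cv
    refine ⟨c.trans (hsPermIso σ hσX hσX' hσ1), ?_⟩
    show hsPermIso σ hσX hσX' hσ1 (c v) = _
    exact Subtype.ext himg

end Aux

/-- `HS(2k,k)` is vertex transitive: for any two vertices `v, w` there is an automorphism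
mapping `v` to `w`. -/
theorem stmt5 (k : ℕ) (hk : 3 ≤ k) (v w : hsVert (2*k) k) :
    ∃ g : HS (2*k) k ≃g HS (2*k) k, g v = w := by
  have hk1 : 1 ≤ k := by omega
  obtain ⟨gv, hgv⟩ := exists_to_base hk1 v
  obtain ⟨gw, hgw⟩ := exists_to_base hk1 w
  refine ⟨gv.trans gw.symm, ?_⟩
  show gw.symm (gv v) = w
  rw [hgv, ← hgw]
  exact RelIso.symm_apply_apply gw w
end

section
/- The graph HS(2k,k) is symmetric (arc-transitive): for any vertices u,v,x,y with u adjacent to v and x adjacent to y, there exists a graph automorphism α with α(u) = x and α(v) = y. -/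
namespace Stmt6Aux

open Finset

abbrev X (k : ℕ) : Finset ℕ := Finset.Icc 1 (2*k)

lemma card_X (k : ℕ) : (X k).card = 2*k := by
  simp [X, Nat.card_Icc]

lemma one_mem_X (k : ℕ) (hk : 1 ≤ k) : (1:ℕ) ∈ X k := by
  simp only [X, mem_Icc]; omega

/-- Piecewise permutation: `1 ↦ 1`, `S → S'`, `T → T'`, `R → R'`, identity elsewhere. -/
def pf (S T R S' T' R' : Finset ℕ)
    (eS : {a // a ∈ S} ≃ {a // a ∈ S'}) (eT : {a // a ∈ T} ≃ {a // a ∈ T'})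
    (eR : {a // a ∈ R} ≃ {a // a ∈ R'}) : ℕ → ℕ :=
  fun n =>
    if n = 1 then 1
    else if h : n ∈ S then (eS ⟨n, h⟩ : ℕ)
    else if h : n ∈ T then (eT ⟨n, h⟩ : ℕ)
    else if h : n ∈ R then (eR ⟨n, h⟩ : ℕ)
    else n

lemma pf_left (S T R S' T' R' : Finset ℕ)
    (eS : {a // a ∈ S} ≃ {a // a ∈ S'}) (eT : {a // a ∈ T} ≃ {a // a ∈ T'})
    (eR : {a // a ∈ R} ≃ {a // a ∈ R'})
    (h1S : (1:ℕ) ∉ S') (h1T : (1:ℕ) ∉ T') (h1R : (1:ℕ) ∉ R')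
    (hST : Disjoint S' T') (hSR : Disjoint S' R') (hTR : Disjoint T' R')
    (hcov : S' ∪ T' ∪ R' ⊆ insert 1 (S ∪ T ∪ R)) (n : ℕ) :
    pf S' T' R' S T R eS.symm eT.symm eR.symm (pf S T R S' T' R' eS eT eR n) = n := by
  unfold pf
  by_cases hn1 : n = 1
  · simp [hn1]
  · rw [if_neg hn1]
    by_cases hS : n ∈ S
    · rw [dif_pos hS]
      have hmS' : (eS ⟨n, hS⟩ : ℕ) ∈ S' := (eS ⟨n, hS⟩).2
      have hm1 : ¬ ((eS ⟨n, hS⟩ : ℕ) = 1) := fun h => h1S (h ▸ hmS')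
      rw [if_neg hm1, dif_pos hmS']
      have : (⟨(eS ⟨n, hS⟩ : ℕ), hmS'⟩ : {a // a ∈ S'}) = eS ⟨n, hS⟩ := rfl
      rw [this, Equiv.symm_apply_apply]
    · rw [dif_neg hS]
      by_cases hT : n ∈ T
      · rw [dif_pos hT]
        have hmT' : (eT ⟨n, hT⟩ : ℕ) ∈ T' := (eT ⟨n, hT⟩).2
        have hm1 : ¬ ((eT ⟨n, hT⟩ : ℕ) = 1) := fun h => h1T (h ▸ hmT')
        have hmS' : (eT ⟨n, hT⟩ : ℕ) ∉ S' := fun h => (Finset.disjoint_left.mp hST h) hmT'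
        rw [if_neg hm1, dif_neg hmS', dif_pos hmT']
        have : (⟨(eT ⟨n, hT⟩ : ℕ), hmT'⟩ : {a // a ∈ T'}) = eT ⟨n, hT⟩ := rfl
        rw [this, Equiv.symm_apply_apply]
      · rw [dif_neg hT]
        by_cases hR : n ∈ R
        · rw [dif_pos hR]
          have hmR' : (eR ⟨n, hR⟩ : ℕ) ∈ R' := (eR ⟨n, hR⟩).2
          have hm1 : ¬ ((eR ⟨n, hR⟩ : ℕ) = 1) := fun h => h1R (h ▸ hmR')
          have hmS' : (eR ⟨n, hR⟩ : ℕ) ∉ S' := fun h => (Finset.disjoint_left.mp hSR h) hmR'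
          have hmT' : (eR ⟨n, hR⟩ : ℕ) ∉ T' := fun h => (Finset.disjoint_left.mp hTR h) hmR'
          rw [if_neg hm1, dif_neg hmS', dif_neg hmT', dif_pos hmR']
          have : (⟨(eR ⟨n, hR⟩ : ℕ), hmR'⟩ : {a // a ∈ R'}) = eR ⟨n, hR⟩ := rfl
          rw [this, Equiv.symm_apply_apply]
        · rw [dif_neg hR]
          have hout : n ∉ S' ∧ n ∉ T' ∧ n ∉ R' := by
            refine ⟨fun h => ?_, fun h => ?_, fun h => ?_⟩
            · have := hcov (Finset.mem_union_left _ (Finset.mem_union_left _ h))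
              simp only [mem_insert, mem_union] at this
              tauto
            · have := hcov (Finset.mem_union_left _ (Finset.mem_union_right _ h))
              simp only [mem_insert, mem_union] at this
              tauto
            · have := hcov (Finset.mem_union_right _ h)
              simp only [mem_insert, mem_union] at this
              tauto
          rw [if_neg hn1, dif_neg hout.1, dif_neg hout.2.1, dif_neg hout.2.2]

lemma pf_mem (S T R S' T' R' : Finset ℕ)
    (eS : {a // a ∈ S} ≃ {a // a ∈ S'}) (eT : {a // a ∈ T} ≃ {a // a ∈ T'})
    (eR : {a // a ∈ R} ≃ {a // a ∈ R'}) (n : ℕ) :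
    pf S T R S' T' R' eS eT eR n = n ∨
      pf S T R S' T' R' eS eT eR n ∈ insert 1 (S' ∪ T' ∪ R') := by
  unfold pf
  by_cases h1 : n = 1
  · right; simp [h1]
  · rw [if_neg h1]
    by_cases hS : n ∈ S
    · right; rw [dif_pos hS]; simp [(eS ⟨n, hS⟩).2]
    · rw [dif_neg hS]
      by_cases hT : n ∈ T
      · right; rw [dif_pos hT]; simp [(eT ⟨n, hT⟩).2]
      · rw [dif_neg hT]
        by_cases hR : n ∈ R
        · right; rw [dif_pos hR]; simp [(eR ⟨n, hR⟩).2]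
        · left; rw [dif_neg hR]

lemma image_eq_of (f : ℕ → ℕ) (hinj : Function.Injective f) (S S' : Finset ℕ)
    (hf : ∀ a ∈ S, f a ∈ S') (hcard : S.card = S'.card) : S.image f = S' := by
  apply Finset.eq_of_subset_of_card_le
  · intro a ha
    obtain ⟨b, hb, rfl⟩ := Finset.mem_image.mp ha
    exact hf b hb
  · rw [Finset.card_image_of_injective _ hinj, hcard]

lemma adj_iff (k : ℕ) (u v : hsVert (2*k) k) :
    (HS (2*k) k).Adj u v ↔ u.1 ≠ v.1 ∧
      (((u.1 ∩ v.1).card = k - 1 ∧ 1 ∈ u.1 ∧ 1 ∉ v.1) ∨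
       ((v.1 ∩ u.1).card = k - 1 ∧ 1 ∈ v.1 ∧ 1 ∉ u.1)) := by
  rw [HS, SimpleGraph.fromRel_adj]
  constructor
  · rintro ⟨h, h2⟩
    exact ⟨fun hh => h (Subtype.ext hh), h2⟩
  · rintro ⟨h, h2⟩
    exact ⟨fun hh => h (congrArg Subtype.val hh), h2⟩

/-- Automorphism of `HS(2k,k)` induced by a permutation of `ℕ` fixing `1`
and preserving `X k`. -/
def permIso (k : ℕ) (σ : Equiv.Perm ℕ) (h1 : σ 1 = 1)
    (hX : ∀ a ∈ X k, σ a ∈ X k) (hX' : ∀ a ∈ X k, σ.symm a ∈ X k) :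
    HS (2*k) k ≃g HS (2*k) k where
  toEquiv :=
    { toFun := fun v => ⟨v.1.image σ,
        fun a ha => by
          obtain ⟨b, hb, rfl⟩ := Finset.mem_image.mp ha
          exact hX b (v.2.1 hb),
        by rw [Finset.card_image_of_injective _ σ.injective, v.2.2]⟩
      invFun := fun v => ⟨v.1.image σ.symm,
        fun a ha => by
          obtain ⟨b, hb, rfl⟩ := Finset.mem_image.mp ha
          exact hX' b (v.2.1 hb),
        by rw [Finset.card_image_of_injective _ σ.symm.injective, v.2.2]⟩
      left_inv := fun v => Subtype.ext (by
        simp [Finset.image_image])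
      right_inv := fun v => Subtype.ext (by
        simp [Finset.image_image]) }
  map_rel_iff' := by
    intro a b
    have hmem : ∀ s : Finset ℕ, (1:ℕ) ∈ s.image σ ↔ 1 ∈ s := by
      intro s
      constructor
      · intro h
        obtain ⟨b, hb, he⟩ := Finset.mem_image.mp h
        have : b = 1 := σ.injective (by rw [he, h1])
        rwa [this] at hb
      · intro h
        exact Finset.mem_image.mpr ⟨1, h, h1⟩
    simp only [Equiv.coe_fn_mk, adj_iff]
    rw [← Finset.image_inter _ _ σ.injective, ← Finset.image_inter _ _ σ.injective,
        Finset.card_image_of_injective _ σ.injective,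
        Finset.card_image_of_injective _ σ.injective]
    simp only [hmem]
    rw [(Finset.image_injective σ.injective).ne_iff]

lemma comp_card (k : ℕ) (v : hsVert (2*k) k) : (X k \ v.1).card = k := by
  rw [Finset.card_sdiff_of_subset v.2.1, card_X, v.2.2]; omega

/-- The complementation map on vertices. -/
def compVert (k : ℕ) (v : hsVert (2*k) k) : hsVert (2*k) k :=
  ⟨X k \ v.1, Finset.sdiff_subset, comp_card k v⟩

lemma comp_comp (k : ℕ) (v : hsVert (2*k) k) : compVert k (compVert k v) = v :=
  Subtype.ext (Finset.sdiff_sdiff_eq_self v.2.1)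

lemma comp_rel (k : ℕ) (hk : 1 ≤ k) (u v : hsVert (2*k) k)
    (h1 : 1 ∈ u.1) (h2 : 1 ∉ v.1) (hc : (u.1 ∩ v.1).card = k - 1) :
    1 ∈ (compVert k v).1 ∧ 1 ∉ (compVert k u).1 ∧
      ((compVert k v).1 ∩ (compVert k u).1).card = k - 1 := by
  refine ⟨Finset.mem_sdiff.mpr ⟨one_mem_X k hk, h2⟩,
    fun h => (Finset.mem_sdiff.mp h).2 h1, ?_⟩
  have huv : (u.1 ∪ v.1).card = k + 1 := by
    have := Finset.card_union_add_card_inter u.1 v.1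
    rw [hc, u.2.2, v.2.2] at this; omega
  have hsub : u.1 ∪ v.1 ⊆ X k := Finset.union_subset u.2.1 v.2.1
  have heq : (compVert k v).1 ∩ (compVert k u).1 = X k \ (u.1 ∪ v.1) := by
    show X k \ v.1 ∩ (X k \ u.1) = _
    rw [← Finset.sdiff_union_distrib, Finset.union_comm]
  rw [heq, Finset.card_sdiff_of_subset hsub, card_X, huv]; omega

lemma comp_ne (k : ℕ) (u v : hsVert (2*k) k) (h : u.1 ≠ v.1) :
    (compVert k u).1 ≠ (compVert k v).1 := by
  intro hh
  apply h
  have hh' : X k \ u.1 = X k \ v.1 := hh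
  have h2 : X k \ (X k \ u.1) = X k \ (X k \ v.1) := by rw [hh']
  rwa [Finset.sdiff_sdiff_eq_self u.2.1, Finset.sdiff_sdiff_eq_self v.2.1] at h2

/-- Complementation as a graph automorphism. -/
def compIso (k : ℕ) (hk : 1 ≤ k) : HS (2*k) k ≃g HS (2*k) k where
  toEquiv := ⟨compVert k, compVert k, comp_comp k, comp_comp k⟩
  map_rel_iff' := by
    intro a b
    show (HS (2*k) k).Adj (compVert k a) (compVert k b) ↔ (HS (2*k) k).Adj a b
    have mono : ∀ a b : hsVert (2*k) k, (HS (2*k) k).Adj a b →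
        (HS (2*k) k).Adj (compVert k a) (compVert k b) := by
      intro a b hab
      rw [adj_iff] at hab ⊢
      obtain ⟨hne, h | h⟩ := hab
      · obtain ⟨m1, m2, m3⟩ := comp_rel k hk a b h.2.1 h.2.2 h.1
        exact ⟨comp_ne k a b hne, Or.inr ⟨m3, m1, m2⟩⟩
      · obtain ⟨m1, m2, m3⟩ := comp_rel k hk b a h.2.1 h.2.2 h.1
        exact ⟨comp_ne k a b hne, Or.inl ⟨m3, m1, m2⟩⟩
    constructor
    · intro h
      have := mono _ _ h
      rwa [comp_comp, comp_comp] at this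
    · exact mono a b

lemma decomp (k : ℕ) (hk : 1 ≤ k) (u v : hsVert (2*k) k)
    (hu : 1 ∈ u.1) (hv : 1 ∉ v.1) (hcuv : (u.1 ∩ v.1).card = k - 1) :
    (v.1 \ u.1).card = 1 ∧ (X k \ (u.1 ∪ v.1)).card = k - 1 ∧
    u.1 = insert 1 (u.1 ∩ v.1) ∧ v.1 = (u.1 ∩ v.1) ∪ (v.1 \ u.1) ∧
    insert 1 ((u.1 ∩ v.1) ∪ (v.1 \ u.1) ∪ (X k \ (u.1 ∪ v.1))) = X k := by
  have hvu : (v.1 ∩ u.1).card = k - 1 := by rwa [Finset.inter_comm]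
  have hT : (v.1 \ u.1).card = 1 := by
    have := Finset.card_inter_add_card_sdiff v.1 u.1
    rw [hvu, v.2.2] at this; omega
  have hTu : (u.1 \ v.1).card = 1 := by
    have := Finset.card_inter_add_card_sdiff u.1 v.1
    rw [hcuv, u.2.2] at this; omega
  have huvs : u.1 \ v.1 = {1} := by
    have hmem : ({1} : Finset ℕ) ⊆ u.1 \ v.1 := by
      intro a ha
      rw [Finset.mem_singleton] at ha
      subst ha
      exact Finset.mem_sdiff.mpr ⟨hu, hv⟩
    exact (Finset.eq_of_subset_of_card_le hmem (by simp [hTu])).symm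
  have hUn : (u.1 ∪ v.1).card = k + 1 := by
    have := Finset.card_union_add_card_inter u.1 v.1
    rw [hcuv, u.2.2, v.2.2] at this; omega
  have hsub : u.1 ∪ v.1 ⊆ X k := Finset.union_subset u.2.1 v.2.1
  have hR : (X k \ (u.1 ∪ v.1)).card = k - 1 := by
    rw [Finset.card_sdiff_of_subset hsub, card_X, hUn]; omega
  have hueq : u.1 = insert 1 (u.1 ∩ v.1) := by
    have h1 : u.1 \ v.1 ∪ u.1 ∩ v.1 = u.1 := Finset.sdiff_union_inter u.1 v.1
    conv_lhs => rw [← h1, huvs]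
    rw [Finset.insert_eq]
  have hveq : v.1 = (u.1 ∩ v.1) ∪ (v.1 \ u.1) := by
    have h1 : v.1 \ u.1 ∪ v.1 ∩ u.1 = v.1 := Finset.sdiff_union_inter v.1 u.1
    conv_lhs => rw [← h1]
    rw [Finset.inter_comm v.1 u.1, Finset.union_comm (v.1 \ u.1)]
  refine ⟨hT, hR, hueq, hveq, ?_⟩
  apply Finset.Subset.antisymm
  · apply Finset.insert_subset (one_mem_X k hk)
    refine Finset.union_subset (Finset.union_subset ?_ ?_) Finset.sdiff_subset
    · exact fun a ha => u.2.1 (Finset.mem_inter.mp ha).1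
    · exact fun a ha => v.2.1 (Finset.mem_sdiff.mp ha).1
  · intro a ha
    simp only [Finset.mem_insert, Finset.mem_union, Finset.mem_sdiff, Finset.mem_inter]
    by_cases h1 : a = 1
    · tauto
    · by_cases hau : a ∈ u.1
      · by_cases hav : a ∈ v.1
        · tauto
        · exfalso
          have : a ∈ u.1 \ v.1 := Finset.mem_sdiff.mpr ⟨hau, hav⟩
          rw [huvs, Finset.mem_singleton] at this
          exact h1 this
      · by_cases hav : a ∈ v.1
        · tauto
        · tauto

lemma canon (k : ℕ) (hk : 1 ≤ k) (u v x y : hsVert (2*k) k)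
    (hu : 1 ∈ u.1) (hv : 1 ∉ v.1) (hx : 1 ∈ x.1) (hy : 1 ∉ y.1)
    (hcuv : (u.1 ∩ v.1).card = k - 1) (hcxy : (x.1 ∩ y.1).card = k - 1) :
    ∃ α : HS (2*k) k ≃g HS (2*k) k, α u = x ∧ α v = y := by
  obtain ⟨hT, hR, hueq, hveq, hcover⟩ := decomp k hk u v hu hv hcuv
  obtain ⟨hT', hR', hxeq, hyeq, hcover'⟩ := decomp k hk x y hx hy hcxy
  set S : Finset ℕ := u.1 ∩ v.1 with hSdef
  set T : Finset ℕ := v.1 \ u.1 with hTdef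
  set R : Finset ℕ := X k \ (u.1 ∪ v.1) with hRdef
  set S' : Finset ℕ := x.1 ∩ y.1 with hS'def
  set T' : Finset ℕ := y.1 \ x.1 with hT'def
  set R' : Finset ℕ := X k \ (x.1 ∪ y.1) with hR'def
  have eS : {a // a ∈ S} ≃ {a // a ∈ S'} := Finset.equivOfCardEq (hcuv.trans hcxy.symm)
  have eT : {a // a ∈ T} ≃ {a // a ∈ T'} := Finset.equivOfCardEq (hT.trans hT'.symm)
  have eR : {a // a ∈ R} ≃ {a // a ∈ R'} := Finset.equivOfCardEq (hR.trans hR'.symm)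
  -- membership facts
  have h1S : (1:ℕ) ∉ S := fun h => hv (Finset.mem_inter.mp h).2
  have h1T : (1:ℕ) ∉ T := fun h => hv (Finset.mem_sdiff.mp h).1
  have h1R : (1:ℕ) ∉ R := fun h =>
    (Finset.mem_sdiff.mp h).2 (Finset.mem_union_left _ hu)
  have h1S' : (1:ℕ) ∉ S' := fun h => hy (Finset.mem_inter.mp h).2
  have h1T' : (1:ℕ) ∉ T' := fun h => hy (Finset.mem_sdiff.mp h).1
  have h1R' : (1:ℕ) ∉ R' := fun h =>
    (Finset.mem_sdiff.mp h).2 (Finset.mem_union_left _ hx)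
  have dST : Disjoint S T := Finset.disjoint_left.mpr
    (fun a ha hb => (Finset.mem_sdiff.mp hb).2 (Finset.mem_inter.mp ha).1)
  have dSR : Disjoint S R := Finset.disjoint_left.mpr
    (fun a ha hb => (Finset.mem_sdiff.mp hb).2
      (Finset.mem_union_left _ (Finset.mem_inter.mp ha).1))
  have dTR : Disjoint T R := Finset.disjoint_left.mpr
    (fun a ha hb => (Finset.mem_sdiff.mp hb).2
      (Finset.mem_union_right _ (Finset.mem_sdiff.mp ha).1))
  have dST' : Disjoint S' T' := Finset.disjoint_left.mpr
    (fun a ha hb => (Finset.mem_sdiff.mp hb).2 (Finset.mem_inter.mp ha).1)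
  have dSR' : Disjoint S' R' := Finset.disjoint_left.mpr
    (fun a ha hb => (Finset.mem_sdiff.mp hb).2
      (Finset.mem_union_left _ (Finset.mem_inter.mp ha).1))
  have dTR' : Disjoint T' R' := Finset.disjoint_left.mpr
    (fun a ha hb => (Finset.mem_sdiff.mp hb).2
      (Finset.mem_union_right _ (Finset.mem_sdiff.mp ha).1))
  have cov1 : S' ∪ T' ∪ R' ⊆ insert 1 (S ∪ T ∪ R) := by
    rw [hcover]
    intro a ha
    rw [← hcover']
    exact Finset.mem_insert_of_mem ha
  have cov2 : S ∪ T ∪ R ⊆ insert 1 (S' ∪ T' ∪ R') := by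
    rw [hcover']
    intro a ha
    rw [← hcover]
    exact Finset.mem_insert_of_mem ha
  have hleft := pf_left S T R S' T' R' eS eT eR h1S' h1T' h1R' dST' dSR' dTR' cov1
  have hright : ∀ n, pf S T R S' T' R' eS eT eR
      (pf S' T' R' S T R eS.symm eT.symm eR.symm n) = n := by
    have := pf_left S' T' R' S T R eS.symm eT.symm eR.symm h1S h1T h1R dST dSR dTR cov2
    simpa using this
  set σ : Equiv.Perm ℕ :=
    ⟨pf S T R S' T' R' eS eT eR, pf S' T' R' S T R eS.symm eT.symm eR.symm,
      hleft, hright⟩ with hσdef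
  have hσ1 : σ 1 = 1 := by
    show pf S T R S' T' R' eS eT eR 1 = 1
    unfold pf; simp
  have hXmap : ∀ a ∈ X k, σ a ∈ X k := by
    intro a ha
    rcases pf_mem S T R S' T' R' eS eT eR a with h | h
    · show pf S T R S' T' R' eS eT eR a ∈ X k
      rw [h]; exact ha
    · show pf S T R S' T' R' eS eT eR a ∈ X k
      rw [← hcover']; exact h
  have hXmap' : ∀ a ∈ X k, σ.symm a ∈ X k := by
    intro a ha
    rcases pf_mem S' T' R' S T R eS.symm eT.symm eR.symm a with h | h
    · show pf S' T' R' S T R eS.symm eT.symm eR.symm a ∈ X k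
      rw [h]; exact ha
    · show pf S' T' R' S T R eS.symm eT.symm eR.symm a ∈ X k
      rw [← hcover]; exact h
  refine ⟨permIso k σ hσ1 hXmap hXmap', ?_, ?_⟩
  · apply Subtype.ext
    show u.1.image σ = x.1
    have hSim : S.image σ = S' := by
      apply image_eq_of _ σ.injective
      · intro a ha
        show pf S T R S' T' R' eS eT eR a ∈ S'
        unfold pf
        rw [if_neg (fun h : a = 1 => h1S (h ▸ ha)), dif_pos ha]
        exact (eS ⟨a, ha⟩).2
      · exact hcuv.trans hcxy.symm
    rw [hueq, hxeq, Finset.image_insert, hσ1, hSim]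
  · apply Subtype.ext
    show v.1.image σ = y.1
    have hSim : S.image σ = S' := by
      apply image_eq_of _ σ.injective
      · intro a ha
        show pf S T R S' T' R' eS eT eR a ∈ S'
        unfold pf
        rw [if_neg (fun h : a = 1 => h1S (h ▸ ha)), dif_pos ha]
        exact (eS ⟨a, ha⟩).2
      · exact hcuv.trans hcxy.symm
    have hTim : T.image σ = T' := by
      apply image_eq_of _ σ.injective
      · intro a ha
        show pf S T R S' T' R' eS eT eR a ∈ T'
        unfold pf
        rw [if_neg (fun h : a = 1 => h1T (h ▸ ha)),
            dif_neg (fun h : a ∈ S => Finset.disjoint_left.mp dST h ha), dif_pos ha]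
        exact (eT ⟨a, ha⟩).2
      · exact hT.trans hT'.symm
    rw [hveq, hyeq, Finset.image_union, hSim, hTim]

end Stmt6Aux

/-- `HS(2k,k)` is symmetric (arc-transitive): for any vertices `u, v, x, y` with
`u ~ v` and `x ~ y` there is an automorphism `α` with `α(u) = x` and `α(v) = y`. -/
theorem stmt6 (k : ℕ) (hk : 2 ≤ k) (u v x y : hsVert (2*k) k)
    (huv : (HS (2*k) k).Adj u v) (hxy : (HS (2*k) k).Adj x y) :
    ∃ α : HS (2*k) k ≃g HS (2*k) k, α u = x ∧ α v = y := by
  have hk1 : 1 ≤ k := by omega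
  rw [Stmt6Aux.adj_iff] at huv hxy
  obtain ⟨hne, hrel⟩ := huv
  obtain ⟨hne', hrel'⟩ := hxy
  set C := Stmt6Aux.compIso k hk1 with hCdef
  have hCapp : ∀ z : hsVert (2*k) k, C z = Stmt6Aux.compVert k z := fun z => rfl
  rcases hrel with ⟨hc, hu1, hv1⟩ | ⟨hc, hv1, hu1⟩ <;>
    rcases hrel' with ⟨hc', hx1, hy1⟩ | ⟨hc', hy1, hx1⟩
  · exact Stmt6Aux.canon k hk1 u v x y hu1 hv1 hx1 hy1 hc hc'
  · -- 1 ∈ u, 1 ∈ y : map (u,v) to (C x, C y), then complement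
    obtain ⟨m1, m2, m3⟩ := Stmt6Aux.comp_rel k hk1 y x hy1 hx1 hc'
    obtain ⟨β, hβ1, hβ2⟩ := Stmt6Aux.canon k hk1 u v
      (Stmt6Aux.compVert k x) (Stmt6Aux.compVert k y) hu1 hv1 m1 m2 hc m3
    refine ⟨β.trans C, ?_, ?_⟩
    · show C (β u) = x
      rw [hβ1, hCapp]
      exact Stmt6Aux.comp_comp k x
    · show C (β v) = y
      rw [hβ2, hCapp]
      exact Stmt6Aux.comp_comp k y
  · -- 1 ∈ v, 1 ∈ x
    obtain ⟨m1, m2, m3⟩ := Stmt6Aux.comp_rel k hk1 v u hv1 hu1 hc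
    obtain ⟨β, hβ1, hβ2⟩ := Stmt6Aux.canon k hk1
      (Stmt6Aux.compVert k u) (Stmt6Aux.compVert k v) x y m1 m2 hx1 hy1 m3 hc'
    refine ⟨C.trans β, ?_, ?_⟩
    · show β (C u) = x
      rw [hCapp]; exact hβ1
    · show β (C v) = y
      rw [hCapp]; exact hβ2
  · -- 1 ∈ v, 1 ∈ y
    obtain ⟨m1, m2, m3⟩ := Stmt6Aux.comp_rel k hk1 v u hv1 hu1 hc
    obtain ⟨m1', m2', m3'⟩ := Stmt6Aux.comp_rel k hk1 y x hy1 hx1 hc'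
    obtain ⟨β, hβ1, hβ2⟩ := Stmt6Aux.canon k hk1
      (Stmt6Aux.compVert k u) (Stmt6Aux.compVert k v)
      (Stmt6Aux.compVert k x) (Stmt6Aux.compVert k y) m1 m2 m1' m2' m3 m3'
    refine ⟨C.trans (β.trans C), ?_, ?_⟩
    · show C (β (C u)) = x
      rw [hCapp u, hβ1, hCapp]
      exact Stmt6Aux.comp_comp k x
    · show C (β (C v)) = y
      rw [hCapp v, hβ2, hCapp]
      exact Stmt6Aux.comp_comp k y
end

section
/- Every 3-path in HS(2k,k) (k ≥ 3) extends to a unique 6-cycle: explicitly, the 3-path v₁v₂v₃v₄ with v₁ = {y₁,x₂,...,x_k}, v₂ = {1,x₂,...,x_k}, v₃ = {y₂,x₂,...,x_k}, v₄ = {y₂,1,x₃,...,x_k} lies in exactly one 6-cycle, whose remaining vertices are v₅ = {y₂,y₁,x₃,...,x_k} and v₆ = {y₁,1,x₃,...,x_k}. -/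
lemma swap_struct {k : ℕ} (hk : 1 ≤ k) (A B : Finset ℕ) (hA : A.card = k) (hB : B.card = k)
    (hAB : (A ∩ B).card = k - 1) (e : ℕ) (heA : e ∈ A) (heB : e ∉ B) :
    A.erase e ⊆ B ∧ ∃ b, b ∉ A ∧ B = insert b (A.erase e) := by
  have hsub : A ∩ B ⊆ A.erase e := fun x hx =>
    Finset.mem_erase.2 ⟨fun h => heB (h ▸ (Finset.mem_inter.1 hx).2), (Finset.mem_inter.1 hx).1⟩
  have hcardE : (A.erase e).card = k - 1 := by rw [Finset.card_erase_of_mem heA, hA]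
  have heq : A ∩ B = A.erase e := Finset.eq_of_subset_of_card_le hsub (by rw [hcardE, hAB])
  have hsub2 : A.erase e ⊆ B := heq ▸ Finset.inter_subset_right
  have hc1 : (B \ A).card = 1 := by
    have := Finset.card_sdiff_add_card_inter B A
    rw [Finset.inter_comm, hAB, hB] at this; omega
  obtain ⟨b, hb⟩ := Finset.card_eq_one.1 hc1
  refine ⟨hsub2, b, ?_, ?_⟩
  · have : b ∈ B \ A := hb ▸ Finset.mem_singleton_self b
    exact (Finset.mem_sdiff.1 this).2
  · have h2 : B ∩ A ∪ B \ A = B := by ext t; simp; tauto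
    rw [← h2, hb, Finset.inter_comm, heq]
    ext t; simp [or_comm]


lemma inter_ins1 {a b : ℕ} {S : Finset ℕ} (ha : a ∉ S) (hb : b ∉ S) (hab : a ≠ b) :
    insert a S ∩ insert b S = S := by
  ext t
  simp only [Finset.mem_inter, Finset.mem_insert]
  constructor
  · rintro ⟨h | h, h' | h'⟩ <;> simp_all
  · intro h; tauto

lemma inter_ins2 {a c b d : ℕ} {S : Finset ℕ} (hab : a ≠ b) (had : a ≠ d) (hcb : c ≠ b)
    (hcd : c ≠ d) (ha : a ∉ S) (hc : c ∉ S) (hb : b ∉ S) (hd : d ∉ S) :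
    insert a (insert c S) ∩ insert b (insert d S) = S := by
  ext t
  simp only [Finset.mem_inter, Finset.mem_insert]
  constructor
  · rintro ⟨h | h | h, h' | h' | h'⟩ <;> simp_all
  · intro h; tauto


set_option maxHeartbeats 1600000 in
/-- Every 3-path in `HS(2k,k)` (`k ≥ 3`) extends to a unique 6-cycle: the 3-path
`v₁v₂v₃v₄` with `v₁ = {y₁,x₂,...,x_k}`, `v₂ = {1,x₂,...,x_k}`, `v₃ = {y₂,x₂,...,x_k}`,
`v₄ = {y₂,1,x₃,...,x_k}` lies in exactly one 6-cycle, whose remaining vertices are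
`v₅ = {y₂,y₁,x₃,...,x_k}` and `v₆ = {y₁,1,x₃,...,x_k}`. (Here `S'` plays the role of
`{x₃,...,x_k}`.) -/
theorem stmt9 (k : ℕ) (hk : 3 ≤ k)
    (y₁ y₂ x₂ : ℕ) (S' : Finset ℕ)
    (hS'X : S' ⊆ Finset.Icc 1 (2*k)) (hS'card : S'.card = k - 2)
    (hy₁X : y₁ ∈ Finset.Icc 1 (2*k)) (hy₂X : y₂ ∈ Finset.Icc 1 (2*k))
    (hx₂X : x₂ ∈ Finset.Icc 1 (2*k))
    (hnd : ([1, x₂, y₁, y₂] : List ℕ).Nodup)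
    (h1S : 1 ∉ S') (hx₂S : x₂ ∉ S') (hy₁S : y₁ ∉ S') (hy₂S : y₂ ∉ S')
    (v₁ v₂ v₃ v₄ : hsVert (2*k) k)
    (hv₁ : v₁.1 = insert y₁ (insert x₂ S'))
    (hv₂ : v₂.1 = insert 1 (insert x₂ S'))
    (hv₃ : v₃.1 = insert y₂ (insert x₂ S'))
    (hv₄ : v₄.1 = insert y₂ (insert 1 S')) :
    (∃! p : hsVert (2*k) k × hsVert (2*k) k,
      (HS (2*k) k).Adj v₄ p.1 ∧ (HS (2*k) k).Adj p.1 p.2 ∧ (HS (2*k) k).Adj p.2 v₁ ∧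
      ([v₁, v₂, v₃, v₄, p.1, p.2] : List (hsVert (2*k) k)).Nodup) ∧
    (∀ p : hsVert (2*k) k × hsVert (2*k) k,
      ((HS (2*k) k).Adj v₄ p.1 ∧ (HS (2*k) k).Adj p.1 p.2 ∧ (HS (2*k) k).Adj p.2 v₁ ∧
        ([v₁, v₂, v₃, v₄, p.1, p.2] : List (hsVert (2*k) k)).Nodup) →
      p.1.1 = insert y₂ (insert y₁ S') ∧ p.2.1 = insert y₁ (insert 1 S')) := by
  simp at hnd
  obtain ⟨⟨h1x₂, h1y₁, h1y₂⟩, ⟨hx₂y₁, hx₂y₂⟩, hy₁y₂⟩ := hnd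
  have hk1 : 1 ≤ k := by omega
  have hcard2 : ∀ a b : ℕ, a ∉ S' → b ∉ S' → a ≠ b → (insert a (insert b S')).card = k := by
    intro a b ha hb hab
    rw [Finset.card_insert_of_notMem (by simp [hab, ha]), Finset.card_insert_of_notMem hb,
      hS'card]; omega
  have hcard1 : ∀ a : ℕ, a ∉ S' → (insert a S').card = k - 1 := by
    intro a ha
    rw [Finset.card_insert_of_notMem ha, hS'card]; omega
  have h1v₄ : 1 ∈ v₄.1 := by simp [hv₄]
  have h1v₁ : 1 ∉ v₁.1 := by simp [hv₁, h1y₁, h1x₂, h1S]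
  have hv₄e : v₄.1.erase 1 = insert y₂ S' := by
    rw [hv₄, Finset.insert_comm, Finset.erase_insert (by simp [h1y₂, h1S])]
  -- key uniqueness statement
  have key : ∀ p : hsVert (2*k) k × hsVert (2*k) k,
      ((HS (2*k) k).Adj v₄ p.1 ∧ (HS (2*k) k).Adj p.1 p.2 ∧ (HS (2*k) k).Adj p.2 v₁ ∧
        ([v₁, v₂, v₃, v₄, p.1, p.2] : List (hsVert (2*k) k)).Nodup) →
      p.1.1 = insert y₂ (insert y₁ S') ∧ p.2.1 = insert y₁ (insert 1 S') := by
    rintro ⟨p1, p2⟩ ⟨ha1, ha2, ha3, hnd6⟩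
    rw [HS, SimpleGraph.fromRel_adj] at ha1 ha2 ha3
    obtain ⟨hne1, hr1⟩ := ha1
    have hr1' : (v₄.1 ∩ p1.1).card = k - 1 ∧ 1 ∉ p1.1 := by
      rcases hr1 with ⟨h, _, h'⟩ | ⟨h, _, h'⟩
      · exact ⟨h, h'⟩
      · exact absurd h1v₄ h'
    obtain ⟨hc14, h1p1⟩ := hr1'
    obtain ⟨_, b, hbv₄, hp1eq⟩ := swap_struct hk1 v₄.1 p1.1 v₄.2.2 p1.2.2 hc14 1 h1v₄ h1p1
    rw [hv₄e] at hp1eq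
    rw [hv₄] at hbv₄
    simp only [Finset.mem_insert, not_or] at hbv₄
    obtain ⟨hby₂, hb1, hbS⟩ := hbv₄
    obtain ⟨hne3, hr3⟩ := ha3
    have hr3' : (p2.1 ∩ v₁.1).card = k - 1 ∧ 1 ∈ p2.1 := by
      rcases hr3 with ⟨h, h', _⟩ | ⟨h, h', _⟩
      · exact ⟨h, h'⟩
      · exact absurd h' h1v₁
    obtain ⟨hc21, h1p2⟩ := hr3'
    obtain ⟨hTsub, _⟩ := swap_struct hk1 p2.1 v₁.1 p2.2.2 v₁.2.2 hc21 1 h1p2 h1v₁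
    obtain ⟨hne2, hr2⟩ := ha2
    have hc22 : (p2.1 ∩ p1.1).card = k - 1 := by
      rcases hr2 with ⟨h, h', _⟩ | ⟨h, _, _⟩
      · exact absurd h' h1p1
      · exact h
    obtain ⟨hTsub2, _⟩ := swap_struct hk1 p2.1 p1.1 p2.2.2 p1.2.2 hc22 1 h1p2 h1p1
    have hTcard : (p2.1.erase 1).card = k - 1 := by
      rw [Finset.card_erase_of_mem h1p2, p2.2.2]
    by_cases hby₁ : b = y₁
    · subst hby₁
      have hint : v₁.1 ∩ p1.1 = insert b S' := by
        rw [hv₁, hp1eq, ← Finset.insert_inter_distrib,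
          inter_ins1 hx₂S hy₂S (fun h => hx₂y₂ h)]
      have hT : p2.1.erase 1 = insert b S' := by
        apply Finset.eq_of_subset_of_card_le
        · rw [← hint]; exact Finset.subset_inter hTsub hTsub2
        · rw [hTcard, hcard1 b hbS]
      constructor
      · rw [hp1eq, Finset.insert_comm]
      · rw [← Finset.insert_erase h1p2, hT, Finset.insert_comm]
    · by_cases hbx₂ : b = x₂
      · exfalso
        subst hbx₂
        have : p1 = v₃ := Subtype.ext (by rw [hp1eq, hv₃, Finset.insert_comm])
        rw [this] at hnd6
        simp at hnd6
      · exfalso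
        have hint : v₁.1 ∩ p1.1 = S' := by
          rw [hv₁, hp1eq, Finset.inter_comm]
          exact inter_ins2 hby₁ hbx₂ (fun h => hy₁y₂ h.symm) (fun h => hx₂y₂ h.symm)
            hbS hy₂S hy₁S hx₂S
        have hsub : p2.1.erase 1 ⊆ S' := by
          rw [← hint]; exact Finset.subset_inter hTsub hTsub2
        have := Finset.card_le_card hsub
        rw [hTcard, hS'card] at this
        exact absurd this (by clear * - hk; omega)
  refine ⟨?_, key⟩
  -- existence
  have hXsub : ∀ a b : ℕ, a ∈ Finset.Icc 1 (2*k) → b ∈ Finset.Icc 1 (2*k) →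
      insert a (insert b S') ⊆ Finset.Icc 1 (2*k) := by
    intro a b ha hb t ht
    simp only [Finset.mem_insert] at ht
    rcases ht with h | h | h
    · exact h ▸ ha
    · exact h ▸ hb
    · exact hS'X h
  have h1X : (1 : ℕ) ∈ Finset.Icc 1 (2*k) := by simp; omega
  set q1 : hsVert (2*k) k :=
    ⟨insert y₂ (insert y₁ S'), hXsub _ _ hy₂X hy₁X, hcard2 _ _ hy₂S hy₁S (Ne.symm hy₁y₂)⟩ with hq1
  set q2 : hsVert (2*k) k :=
    ⟨insert y₁ (insert 1 S'), hXsub _ _ hy₁X h1X, hcard2 _ _ hy₁S h1S (Ne.symm h1y₁)⟩ with hq2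
  have m1q1 : (1 : ℕ) ∉ q1.1 := by simp [hq1, h1y₂, h1y₁, h1S]
  have m1q2 : (1 : ℕ) ∈ q2.1 := by simp [hq2]
  have mi1 : v₄.1 ∩ q1.1 = insert y₂ S' := by
    rw [hv₄]
    show insert y₂ (insert 1 S') ∩ insert y₂ (insert y₁ S') = insert y₂ S'
    rw [← Finset.insert_inter_distrib, inter_ins1 h1S hy₁S (fun h => h1y₁ h)]
  have mi2 : q2.1 ∩ q1.1 = insert y₁ S' := by
    show insert y₁ (insert 1 S') ∩ insert y₂ (insert y₁ S') = insert y₁ S'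
    rw [Finset.insert_comm y₂, ← Finset.insert_inter_distrib,
      inter_ins1 h1S hy₂S (fun h => h1y₂ h)]
  have mi3 : q2.1 ∩ v₁.1 = insert y₁ S' := by
    rw [hv₁]
    show insert y₁ (insert 1 S') ∩ insert y₁ (insert x₂ S') = insert y₁ S'
    rw [← Finset.insert_inter_distrib, inter_ins1 h1S hx₂S (fun h => h1x₂ h)]
  have hnev : ∀ (a b : hsVert (2*k) k) (t : ℕ), t ∈ a.1 → t ∉ b.1 → a ≠ b :=
    fun a b t ht ht' h => ht' (h ▸ ht)
  -- membership facts
  have my₁v₁ : y₁ ∈ v₁.1 := by simp [hv₁]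
  have my₁v₂ : y₁ ∉ v₂.1 := by simp [hv₂, Ne.symm h1y₁, Ne.symm hx₂y₁, hy₁S]
  have my₁v₃ : y₁ ∉ v₃.1 := by simp [hv₃, Ne.symm hx₂y₁, hy₁y₂, hy₁S]
  have mx₂v₁ : x₂ ∈ v₁.1 := by simp [hv₁]
  have mx₂v₂ : x₂ ∈ v₂.1 := by simp [hv₂]
  have mx₂v₃ : x₂ ∈ v₃.1 := by simp [hv₃]
  have mx₂v₄ : x₂ ∉ v₄.1 := by simp [hv₄, hx₂y₂, Ne.symm h1x₂, hx₂S]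
  have mx₂q1 : x₂ ∉ q1.1 := by simp [hq1, hx₂y₂, hx₂y₁, hx₂S]
  have mx₂q2 : x₂ ∉ q2.1 := by simp [hq2, hx₂y₁, Ne.symm h1x₂, hx₂S]
  have m1v₂ : (1 : ℕ) ∈ v₂.1 := by simp [hv₂]
  have m1v₃ : (1 : ℕ) ∉ v₃.1 := by simp [hv₃, h1y₂, h1x₂, h1S]
  have my₂v₄ : y₂ ∈ v₄.1 := by simp [hv₄]
  have my₂q1 : y₂ ∈ q1.1 := by simp [hq1]
  have my₂q2 : y₂ ∉ q2.1 := by simp [hq2, Ne.symm hy₁y₂, Ne.symm h1y₂, hy₂S]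
  have hprops : (HS (2*k) k).Adj v₄ (q1, q2).1 ∧ (HS (2*k) k).Adj (q1, q2).1 (q1, q2).2 ∧
      (HS (2*k) k).Adj (q1, q2).2 v₁ ∧
      ([v₁, v₂, v₃, v₄, (q1, q2).1, (q1, q2).2] : List (hsVert (2*k) k)).Nodup := by
    refine ⟨?_, ?_, ?_, ?_⟩
    · rw [HS, SimpleGraph.fromRel_adj]
      exact ⟨hnev _ _ 1 h1v₄ m1q1, Or.inl ⟨by rw [mi1, hcard1 _ hy₂S], h1v₄, m1q1⟩⟩
    · rw [HS, SimpleGraph.fromRel_adj]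
      refine ⟨Ne.symm (hnev _ _ 1 m1q2 m1q1), Or.inr ⟨by rw [mi2, hcard1 _ hy₁S], m1q2, m1q1⟩⟩
    · rw [HS, SimpleGraph.fromRel_adj]
      exact ⟨hnev _ _ 1 m1q2 h1v₁, Or.inl ⟨by rw [mi3, hcard1 _ hy₁S], m1q2, h1v₁⟩⟩
    · simp only [List.nodup_cons, List.mem_cons, List.not_mem_nil, or_false,
        List.mem_singleton, List.nodup_nil, and_true, not_or]
      exact ⟨⟨hnev _ _ y₁ my₁v₁ my₁v₂, hnev _ _ y₁ my₁v₁ my₁v₃, hnev _ _ x₂ mx₂v₁ mx₂v₄,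
          hnev _ _ x₂ mx₂v₁ mx₂q1, hnev _ _ x₂ mx₂v₁ mx₂q2⟩,
        ⟨hnev _ _ 1 m1v₂ m1v₃, hnev _ _ x₂ mx₂v₂ mx₂v₄, hnev _ _ x₂ mx₂v₂ mx₂q1,
          hnev _ _ x₂ mx₂v₂ mx₂q2⟩,
        ⟨hnev _ _ x₂ mx₂v₃ mx₂v₄, hnev _ _ x₂ mx₂v₃ mx₂q1, hnev _ _ x₂ mx₂v₃ mx₂q2⟩,
        ⟨hnev _ _ 1 h1v₄ m1q1, hnev _ _ y₂ my₂v₄ my₂q2⟩,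
        ⟨hnev _ _ y₂ my₂q1 my₂q2, not_false⟩⟩
  exact ⟨(q1, q2), hprops, fun p hp => by
    obtain ⟨e1, e2⟩ := key p hp
    exact Prod.ext (Subtype.ext e1) (Subtype.ext e2)⟩
end

section
/- In HS(2k,k) with k ≥ 3, for every edge {v,w} the group L_{v,w} of automorphisms fixing pointwise v, w, and all neighbors of v and of w is trivial. -/
/-- The automorphism group of a graph, as a subgroup of the permutations of the vertices. -/
def graphAut {V : Type*} (Γ : SimpleGraph V) : Subgroup (Equiv.Perm V) where
  carrier := {e | ∀ a b, Γ.Adj (e a) (e b) ↔ Γ.Adj a b}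
  one_mem' := by intro a b; simp
  mul_mem' := by
    intro e f he hf a b
    simp only [Equiv.Perm.mul_apply]
    rw [he, hf]
  inv_mem' := by
    intro e he a b
    have h := he (e⁻¹ a) (e⁻¹ b)
    simpa using h.symm

namespace HSaux
open Finset

variable {k : ℕ}

def ee (u : hsVert (2*k) k) : Finset ℕ := u.1.erase 1

def Dd (E F : Finset ℕ) : ℕ := min (E \ F).card (F \ E).card

lemma one_notMem_ee (u : hsVert (2*k) k) : 1 ∉ ee u := Finset.notMem_erase _ _

lemma ee_subset_val (u : hsVert (2*k) k) : ee u ⊆ u.1 := Finset.erase_subset _ _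

lemma ee_subset (u : hsVert (2*k) k) : ee u ⊆ Finset.Icc 2 (2*k) := by
  intro x hx
  have hx1 : x ≠ 1 := Finset.ne_of_mem_erase hx
  have hxu : x ∈ u.1 := Finset.mem_of_mem_erase hx
  have := u.2.1 hxu
  simp only [Finset.mem_Icc] at this ⊢
  omega

lemma card_ee_of_mem (u : hsVert (2*k) k) (h : 1 ∈ u.1) : (ee u).card = k - 1 := by
  simp [ee, Finset.card_erase_of_mem h, u.2.2]

lemma card_ee_of_notMem (u : hsVert (2*k) k) (h : 1 ∉ u.1) : (ee u).card = k := by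
  simp [ee, Finset.erase_eq_of_notMem h, u.2.2]

lemma val_eq_of_mem (u : hsVert (2*k) k) (h : 1 ∈ u.1) : u.1 = insert 1 (ee u) :=
  (Finset.insert_erase h).symm

lemma val_eq_of_notMem (u : hsVert (2*k) k) (h : 1 ∉ u.1) : u.1 = ee u :=
  (Finset.erase_eq_of_notMem h).symm

lemma eq_of_ee (u f : hsVert (2*k) k) (hl : 1 ∈ u.1 ↔ 1 ∈ f.1) (he : ee u = ee f) : u = f := by
  apply Subtype.ext
  by_cases h : 1 ∈ u.1
  · rw [val_eq_of_mem u h, val_eq_of_mem f (hl.mp h), he]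
  · rw [val_eq_of_notMem u h, val_eq_of_notMem f (fun hf => h (hl.mpr hf)), he]

lemma adj_of (a b : hsVert (2*k) k) (h1a : 1 ∈ a.1) (h1b : 1 ∉ b.1) (hsub : ee a ⊆ ee b) :
    (HS (2*k) k).Adj a b := by
  rw [HS, SimpleGraph.fromRel_adj]
  refine ⟨fun h => h1b (h ▸ h1a), Or.inl ⟨?_, h1a, h1b⟩⟩
  have hab : a.1 ∩ b.1 = ee a := by
    apply Finset.Subset.antisymm
    · intro x hx
      simp only [Finset.mem_inter] at hx
      exact Finset.mem_erase.mpr ⟨fun h => h1b (h ▸ hx.2), hx.1⟩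
    · intro x hx
      have hx1 : x ∈ b.1 := by
        rw [val_eq_of_notMem b h1b]; exact hsub hx
      exact Finset.mem_inter.mpr ⟨ee_subset_val a hx, hx1⟩
  rw [hab, card_ee_of_mem a h1a]

lemma adj_struct {a b : hsVert (2*k) k} (h : (HS (2*k) k).Adj a b) :
    (1 ∈ a.1 ∧ 1 ∉ b.1 ∧ ee a ⊆ ee b) ∨ (1 ∈ b.1 ∧ 1 ∉ a.1 ∧ ee b ⊆ ee a) := by
  rw [HS, SimpleGraph.fromRel_adj] at h
  obtain ⟨-, h | h⟩ := h
  · obtain ⟨hc, h1a, h1b⟩ := h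
    left
    refine ⟨h1a, h1b, ?_⟩
    have hsub : a.1 ∩ b.1 ⊆ ee a := by
      intro x hx
      simp only [Finset.mem_inter] at hx
      exact Finset.mem_erase.mpr ⟨fun h => h1b (h ▸ hx.2), hx.1⟩
    have hcard : (ee a).card ≤ (a.1 ∩ b.1).card := by
      rw [hc, card_ee_of_mem a h1a]
    have heq : a.1 ∩ b.1 = ee a := Finset.eq_of_subset_of_card_le hsub hcard
    rw [← val_eq_of_notMem b h1b, ← heq]
    exact Finset.inter_subset_right
  · obtain ⟨hc, h1b, h1a⟩ := h
    right
    refine ⟨h1b, h1a, ?_⟩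
    have hsub : b.1 ∩ a.1 ⊆ ee b := by
      intro x hx
      simp only [Finset.mem_inter] at hx
      exact Finset.mem_erase.mpr ⟨fun h => h1a (h ▸ hx.2), hx.1⟩
    have hcard : (ee b).card ≤ (b.1 ∩ a.1).card := by
      rw [hc, card_ee_of_mem b h1b]
    have heq : b.1 ∩ a.1 = ee b := Finset.eq_of_subset_of_card_le hsub hcard
    rw [← val_eq_of_notMem a h1a, ← heq]
    exact Finset.inter_subset_right

/-- neighbor of a 1-containing vertex: drop 1, add x -/
def vUp (a : hsVert (2*k) k) (h1 : 1 ∈ a.1) (x : ℕ) (hx2 : x ∈ Finset.Icc 2 (2*k))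
    (hxE : x ∉ ee a) : hsVert (2*k) k :=
  ⟨insert x (ee a), by
    constructor
    · intro z hz
      rcases Finset.mem_insert.mp hz with rfl | hz
      · simp only [Finset.mem_Icc] at hx2 ⊢; omega
      · exact u_spec hz
    · rw [Finset.card_insert_of_notMem hxE, card_ee_of_mem a h1]
      have : 0 < a.1.card := Finset.card_pos.mpr ⟨1, h1⟩
      omega⟩
  where u_spec : ∀ {z}, z ∈ ee a → z ∈ Finset.Icc 1 (2*k) := fun hz => a.2.1 (ee_subset_val a hz)

lemma one_notMem_vUp (a : hsVert (2*k) k) (h1 x hx2 hxE) : 1 ∉ (vUp a h1 x hx2 hxE).1 := by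
  intro h
  rcases Finset.mem_insert.mp h with h | h
  · simp only [Finset.mem_Icc] at hx2; omega
  · exact one_notMem_ee a h

lemma ee_vUp (a : hsVert (2*k) k) (h1 x hx2 hxE) : ee (vUp a h1 x hx2 hxE) = insert x (ee a) := by
  show Finset.erase _ 1 = _
  rw [Finset.erase_eq_of_notMem (one_notMem_vUp a h1 x hx2 hxE)]
  rfl

lemma adj_vUp (a : hsVert (2*k) k) (h1 x hx2 hxE) : (HS (2*k) k).Adj a (vUp a h1 x hx2 hxE) := by
  apply adj_of a _ h1 (one_notMem_vUp a h1 x hx2 hxE)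
  rw [ee_vUp]
  exact Finset.subset_insert _ _

/-- neighbor of a 1-free vertex: drop y, add 1 -/
def vDown (a : hsVert (2*k) k) (h1 : 1 ∉ a.1) (y : ℕ) (hy : y ∈ a.1) : hsVert (2*k) k :=
  ⟨insert 1 (a.1.erase y), by
    have hk : 0 < k := by
      have : 0 < a.1.card := Finset.card_pos.mpr ⟨y, hy⟩
      omega
    constructor
    · intro z hz
      rcases Finset.mem_insert.mp hz with rfl | hz
      · simp only [Finset.mem_Icc]; omega
      · exact a.2.1 (Finset.mem_of_mem_erase hz)
    · rw [Finset.card_insert_of_notMem (fun h => h1 (Finset.mem_of_mem_erase h)),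
        Finset.card_erase_of_mem hy, a.2.2]
      omega⟩

lemma one_mem_vDown (a : hsVert (2*k) k) (h1 y hy) : 1 ∈ (vDown a h1 y hy).1 :=
  Finset.mem_insert_self _ _

lemma ee_vDown (a : hsVert (2*k) k) (h1 y hy) : ee (vDown a h1 y hy) = a.1.erase y := by
  show (insert 1 (a.1.erase y)).erase 1 = a.1.erase y
  exact Finset.erase_insert (fun h => h1 (Finset.mem_of_mem_erase h))

lemma adj_vDown (a : hsVert (2*k) k) (h1 y hy) : (HS (2*k) k).Adj a (vDown a h1 y hy) := by
  apply SimpleGraph.Adj.symm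
  apply adj_of _ a (one_mem_vDown a h1 y hy) h1
  rw [ee_vDown, val_eq_of_notMem a h1]
  exact Finset.erase_subset _ _

lemma walk_parity {a b : hsVert (2*k) k} (p : (HS (2*k) k).Walk a b) :
    ((1 ∈ a.1) ↔ (1 ∈ b.1)) ↔ Even p.length := by
  induction p with
  | nil => simp
  | cons h q ih =>
    rename_i u c d
    have hstep : (1 ∈ u.1) ↔ ¬ (1 ∈ c.1) := by
      rcases adj_struct h with ⟨h1, h2, -⟩ | ⟨h1, h2, -⟩ <;> tauto
    simp only [SimpleGraph.Walk.length_cons, Nat.even_add_one]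
    tauto

lemma Dd_sets (A C F : Finset ℕ) (hAC : A ⊆ C) (hcard : C.card = A.card + 1) :
    (Dd A F ≤ Dd C F + 1 ∧ (F.card = C.card → Dd A F ≤ Dd C F)) ∧
    (Dd C F ≤ Dd A F + 1 ∧ (F.card = A.card → Dd C F ≤ Dd A F)) := by
  have e1 := Finset.card_sdiff_add_card_inter A F
  have e2 := Finset.card_sdiff_add_card_inter C F
  have e3 := Finset.card_sdiff_add_card_inter F A
  have e4 := Finset.card_sdiff_add_card_inter F C
  have e5 : (F ∩ A).card = (A ∩ F).card := by rw [Finset.inter_comm]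
  have e6 : (F ∩ C).card = (C ∩ F).card := by rw [Finset.inter_comm]
  have e7 : (A ∩ F).card ≤ (C ∩ F).card :=
    Finset.card_le_card (Finset.inter_subset_inter hAC (Finset.Subset.refl F))
  have e9 : (A \ F).card ≤ (C \ F).card :=
    Finset.card_le_card (Finset.sdiff_subset_sdiff hAC (Finset.Subset.refl F))
  have e10 : (F \ C).card ≤ (F \ A).card :=
    Finset.card_le_card (Finset.sdiff_subset_sdiff (Finset.Subset.refl F) hAC)
  unfold Dd
  omega

lemma walk_D {a b : hsVert (2*k) k} (p : (HS (2*k) k).Walk a b) :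
    Dd (ee a) (ee b) ≤ p.length / 2 := by
  induction p with
  | nil => simp [Dd]
  | cons h q ih =>
    rename_i u c d
    have hpar := walk_parity q
    have hcc : ∀ {x y : hsVert (2*k) k}, (1 ∈ x.1 ↔ 1 ∈ y.1) → (ee x).card = (ee y).card := by
      intro x y hxy
      by_cases hx : 1 ∈ x.1
      · rw [card_ee_of_mem x hx, card_ee_of_mem y (hxy.mp hx)]
      · rw [card_ee_of_notMem x hx, card_ee_of_notMem y (fun hy => hx (hxy.mpr hy))]
    simp only [SimpleGraph.Walk.length_cons]
    by_cases he : Even q.length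
    · -- levels of c and d agree
      have hlev : (ee d).card = (ee c).card := (hcc (hpar.mpr he)).symm
      rcases adj_struct h with ⟨h1, h2, hsub⟩ | ⟨h1, h2, hsub⟩
      · have hc : (ee c).card = (ee u).card + 1 := by
          rw [card_ee_of_mem u h1, card_ee_of_notMem c h2]
          have : 0 < u.1.card := Finset.card_pos.mpr ⟨1, h1⟩
          omega
        have := ((Dd_sets (ee u) (ee c) (ee d) hsub hc).1).2 (by omega)
        omega
      · have hc : (ee u).card = (ee c).card + 1 := by
          rw [card_ee_of_mem c h1, card_ee_of_notMem u h2]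
          have : 0 < c.1.card := Finset.card_pos.mpr ⟨1, h1⟩
          omega
        have := ((Dd_sets (ee c) (ee u) (ee d) hsub hc).2).2 (by omega)
        omega
    · rw [Nat.not_even_iff] at he
      rcases adj_struct h with ⟨h1, h2, hsub⟩ | ⟨h1, h2, hsub⟩
      · have hc : (ee c).card = (ee u).card + 1 := by
          rw [card_ee_of_mem u h1, card_ee_of_notMem c h2]
          have : 0 < u.1.card := Finset.card_pos.mpr ⟨1, h1⟩
          omega
        have := ((Dd_sets (ee u) (ee c) (ee d) hsub hc).1).1
        omega
      · have hc : (ee u).card = (ee c).card + 1 := by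
          rw [card_ee_of_mem c h1, card_ee_of_notMem u h2]
          have : 0 < c.1.card := Finset.card_pos.mpr ⟨1, h1⟩
          omega
        have := ((Dd_sets (ee c) (ee u) (ee d) hsub hc).2).1
        omega

lemma walk_ex (hk : 0 < k) : ∀ (n : ℕ) (a b : hsVert (2*k) k),
    ((1 ∈ a.1 ↔ 1 ∈ b.1) ↔ Even n) → Dd (ee a) (ee b) ≤ n / 2 →
    ∃ p : (HS (2*k) k).Walk a b, p.length = n := by
  intro n
  induction n with
  | zero =>
    intro a b hpar hD
    have hlev : 1 ∈ a.1 ↔ 1 ∈ b.1 := hpar.mpr (Even.zero)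
    have hcards : (ee a).card = (ee b).card := by
      by_cases hx : 1 ∈ a.1
      · rw [card_ee_of_mem a hx, card_ee_of_mem b (hlev.mp hx)]
      · rw [card_ee_of_notMem a hx, card_ee_of_notMem b (fun hy => hx (hlev.mpr hy))]
    have e1 := Finset.card_sdiff_add_card_inter (ee a) (ee b)
    have e2 := Finset.card_sdiff_add_card_inter (ee b) (ee a)
    have e5 : ((ee b) ∩ (ee a)).card = ((ee a) ∩ (ee b)).card := by rw [Finset.inter_comm]
    have hboth : (ee a \ ee b).card = 0 ∧ (ee b \ ee a).card = 0 := by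
      unfold Dd at hD; omega
    have heq : ee a = ee b := by
      apply Finset.Subset.antisymm
      · rw [← Finset.sdiff_eq_empty_iff_subset]
        exact Finset.card_eq_zero.mp hboth.1
      · rw [← Finset.sdiff_eq_empty_iff_subset]
        exact Finset.card_eq_zero.mp hboth.2
    obtain rfl := eq_of_ee a b hlev heq
    exact ⟨SimpleGraph.Walk.nil, rfl⟩
  | succ n ih =>
    intro a b hpar hD
    by_cases h1 : 1 ∈ a.1
    · -- go up: add an element
      have hget : ∃ x, x ∈ Finset.Icc 2 (2*k) ∧ x ∉ ee a ∧
          ((ee b \ ee a).Nonempty → x ∈ ee b \ ee a) := by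
        by_cases hne : (ee b \ ee a).Nonempty
        · obtain ⟨x, hx⟩ := hne
          refine ⟨x, ee_subset b (Finset.mem_sdiff.mp hx).1, (Finset.mem_sdiff.mp hx).2,
            fun _ => hx⟩
        · have hcard : (ee a).card < (Finset.Icc 2 (2*k)).card := by
            rw [card_ee_of_mem a h1, Nat.card_Icc]
            have : 0 < a.1.card := Finset.card_pos.mpr ⟨1, h1⟩
            have hk : 0 < k := by omega
            omega
          have hne2 : (Finset.Icc 2 (2*k) \ ee a).Nonempty := by
            rw [Finset.sdiff_nonempty]
            intro hsub
            exact absurd (Finset.card_le_card hsub) (by omega)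
          obtain ⟨x, hx⟩ := hne2
          exact ⟨x, (Finset.mem_sdiff.mp hx).1, (Finset.mem_sdiff.mp hx).2, fun h => absurd h hne⟩
      obtain ⟨x, hx2, hxE, hxprog⟩ := hget
      set c := vUp a h1 x hx2 hxE with hc
      have h1c : 1 ∉ c.1 := one_notMem_vUp a h1 x hx2 hxE
      have hparc : (1 ∈ c.1 ↔ 1 ∈ b.1) ↔ Even n := by
        rw [Nat.even_add_one] at hpar
        tauto
      have heec : ee c = insert x (ee a) := ee_vUp a h1 x hx2 hxE
      have hDc : Dd (ee c) (ee b) ≤ n / 2 := by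
        by_cases hne : (ee b \ ee a).Nonempty
        · have hxm := hxprog hne
          rw [Finset.mem_sdiff] at hxm
          have d1 : (ee c \ ee b) = (ee a \ ee b) := by
            rw [heec, Finset.insert_sdiff_of_mem _ hxm.1]
          have d2 : (ee b \ ee c) = (ee b \ ee a).erase x := by
            rw [heec, Finset.sdiff_insert]
          have d2c : (ee b \ ee c).card = (ee b \ ee a).card - 1 := by
            rw [d2, Finset.card_erase_of_mem (Finset.mem_sdiff.mpr hxm)]
          have hxpos : 0 < (ee b \ ee a).card := Finset.card_pos.mpr ⟨x, Finset.mem_sdiff.mpr hxm⟩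
          by_cases he : Even n
          · -- n+1 odd : (n+1)/2 = n/2
            rw [Nat.even_iff] at he
            unfold Dd at hD ⊢
            rw [d1, d2c]
            omega
          · -- n+1 even: levels of a and b agree
            have hlev : 1 ∈ b.1 := by
              have : (1 ∈ a.1 ↔ 1 ∈ b.1) := hpar.mpr (by
                rw [Nat.even_add_one]; exact he)
              exact this.mp h1
            have hcards : (ee a).card = (ee b).card := by
              rw [card_ee_of_mem a h1, card_ee_of_mem b hlev]
            have e1 := Finset.card_sdiff_add_card_inter (ee a) (ee b)
            have e2 := Finset.card_sdiff_add_card_inter (ee b) (ee a)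
            have e5 : ((ee b) ∩ (ee a)).card = ((ee a) ∩ (ee b)).card := by
              rw [Finset.inter_comm]
            rw [Nat.not_even_iff] at he
            unfold Dd at hD ⊢
            rw [d1, d2c]
            omega
        · -- ee b ⊆ ee a ⊆ ee c
          have hsub : ee b ⊆ ee c := by
            rw [Finset.not_nonempty_iff_eq_empty, Finset.sdiff_eq_empty_iff_subset] at hne
            rw [heec]
            exact hne.trans (Finset.subset_insert _ _)
          have : (ee b \ ee c).card = 0 := by
            rw [Finset.card_eq_zero, Finset.sdiff_eq_empty_iff_subset]
            exact hsub
          unfold Dd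
          omega
      obtain ⟨p, hp⟩ := ih c b hparc hDc
      exact ⟨SimpleGraph.Walk.cons (adj_vUp a h1 x hx2 hxE) p, by simp [hp]⟩
    · -- go down: remove an element
      have hEa : ee a = a.1 := (val_eq_of_notMem a h1).symm
      have hget : ∃ y, y ∈ a.1 ∧ ((ee a \ ee b).Nonempty → y ∈ ee a \ ee b) := by
        by_cases hne : (ee a \ ee b).Nonempty
        · obtain ⟨y, hy⟩ := hne
          exact ⟨y, ee_subset_val a (Finset.mem_sdiff.mp hy).1, fun _ => hy⟩
        · have : a.1.Nonempty := Finset.card_pos.mp (by rw [a.2.2]; omega)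
          obtain ⟨y, hy⟩ := this
          exact ⟨y, hy, fun h => absurd h hne⟩
      obtain ⟨y, hy, hyprog⟩ := hget
      set c := vDown a h1 y hy with hc
      have h1c : 1 ∈ c.1 := one_mem_vDown a h1 y hy
      have hparc : (1 ∈ c.1 ↔ 1 ∈ b.1) ↔ Even n := by
        rw [Nat.even_add_one] at hpar
        tauto
      have heec : ee c = (ee a).erase y := by
        rw [ee_vDown, hEa]
      have hyb : y ∉ ee b ∨ ¬ (ee a \ ee b).Nonempty := by
        by_cases hne : (ee a \ ee b).Nonempty
        · exact Or.inl (Finset.mem_sdiff.mp (hyprog hne)).2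
        · exact Or.inr hne
      have hDc : Dd (ee c) (ee b) ≤ n / 2 := by
        by_cases hne : (ee a \ ee b).Nonempty
        · have hym := hyprog hne
          rw [Finset.mem_sdiff] at hym
          have d1 : (ee c \ ee b) = (ee a \ ee b).erase y := by
            rw [heec]
            ext z
            simp only [Finset.mem_sdiff, Finset.mem_erase]
            tauto
          have d1c : (ee c \ ee b).card = (ee a \ ee b).card - 1 := by
            rw [d1, Finset.card_erase_of_mem (Finset.mem_sdiff.mpr hym)]
          have d2 : (ee b \ ee c) = (ee b \ ee a) := by
            rw [heec]
            ext z
            simp only [Finset.mem_sdiff, Finset.mem_erase]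
            constructor
            · rintro ⟨hzb, hz⟩
              refine ⟨hzb, fun hza => hz ⟨fun hzy => ?_, hza⟩⟩
              exact hym.2 (hzy ▸ hzb)
            · rintro ⟨hzb, hza⟩
              exact ⟨hzb, fun hz => hza hz.2⟩
          have hxpos : 0 < (ee a \ ee b).card :=
            Finset.card_pos.mpr ⟨y, Finset.mem_sdiff.mpr hym⟩
          by_cases he : Even n
          · rw [Nat.even_iff] at he
            unfold Dd at hD ⊢
            rw [d1c, d2]
            omega
          · have hlev : 1 ∉ b.1 := by
              have hab : (1 ∈ a.1 ↔ 1 ∈ b.1) := hpar.mpr (by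
                rw [Nat.even_add_one]; exact he)
              exact fun hb => h1 (hab.mpr hb)
            have hcards : (ee a).card = (ee b).card := by
              rw [card_ee_of_notMem a h1, card_ee_of_notMem b hlev]
            have e1 := Finset.card_sdiff_add_card_inter (ee a) (ee b)
            have e2 := Finset.card_sdiff_add_card_inter (ee b) (ee a)
            have e5 : ((ee b) ∩ (ee a)).card = ((ee a) ∩ (ee b)).card := by
              rw [Finset.inter_comm]
            rw [Nat.not_even_iff] at he
            unfold Dd at hD ⊢
            rw [d1c, d2]
            omega
        · have hsub : ee c ⊆ ee b := by
            rw [Finset.not_nonempty_iff_eq_empty, Finset.sdiff_eq_empty_iff_subset] at hne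
            rw [heec]
            exact (Finset.erase_subset _ _).trans hne
          have : (ee c \ ee b).card = 0 := by
            rw [Finset.card_eq_zero, Finset.sdiff_eq_empty_iff_subset]
            exact hsub
          unfold Dd
          omega
      obtain ⟨p, hp⟩ := ih c b hparc hDc
      exact ⟨SimpleGraph.Walk.cons (adj_vDown a h1 y hy) p, by simp [hp]⟩

lemma aut_walk (g : Equiv.Perm (hsVert (2*k) k)) (hg : g ∈ graphAut (HS (2*k) k))
    {a b : hsVert (2*k) k} (p : (HS (2*k) k).Walk a b) :
    ∃ q : (HS (2*k) k).Walk (g a) (g b), q.length = p.length := by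
  have hg' : ∀ a b : hsVert (2*k) k,
      (HS (2*k) k).Adj (g a) (g b) ↔ (HS (2*k) k).Adj a b := hg
  induction p with
  | nil => exact ⟨SimpleGraph.Walk.nil, rfl⟩
  | cons h p ih =>
    obtain ⟨q, hq⟩ := ih
    exact ⟨SimpleGraph.Walk.cons ((hg' _ _).mpr h) q, by simp [hq]⟩

lemma level_pres (hk : 0 < k) (g : Equiv.Perm (hsVert (2*k) k))
    (hg : g ∈ graphAut (HS (2*k) k)) (f u : hsVert (2*k) k) (hf : g f = f) :
    (1 ∈ (g u).1 ↔ 1 ∈ f.1) ↔ (1 ∈ u.1 ↔ 1 ∈ f.1) := by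
  set n := if (1 ∈ u.1 ↔ 1 ∈ f.1) then 2*k else 2*k+1 with hn
  have hpar : (1 ∈ u.1 ↔ 1 ∈ f.1) ↔ Even n := by
    by_cases h : (1 ∈ u.1 ↔ 1 ∈ f.1) <;>
      simp [hn, h, Nat.even_add_one, parity_simps]
  have hD : Dd (ee u) (ee f) ≤ n / 2 := by
    have h1 : Dd (ee u) (ee f) ≤ (ee u).card :=
      le_trans (min_le_left _ _) (Finset.card_le_card (Finset.sdiff_subset))
    have h2 : (ee u).card ≤ k := by
      by_cases h : 1 ∈ u.1
      · rw [card_ee_of_mem u h]; omega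
      · rw [card_ee_of_notMem u h]
    have h3 : k ≤ n / 2 := by
      by_cases h : (1 ∈ u.1 ↔ 1 ∈ f.1) <;> simp [hn, h] <;> omega
    omega
  obtain ⟨pw, hpw⟩ := walk_ex hk n u f hpar hD
  obtain ⟨qw, hqw⟩ := aut_walk g hg pw
  have hp2 := walk_parity qw
  rw [hqw, hpw] at hp2
  rw [hf] at hp2
  rw [hp2, hpar]

lemma Dd_le (hk : 0 < k) (g : Equiv.Perm (hsVert (2*k) k))
    (hg : g ∈ graphAut (HS (2*k) k)) (u f : hsVert (2*k) k) (hf : g f = f) :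
    Dd (ee (g u)) (ee f) ≤ Dd (ee u) (ee f) := by
  set m := Dd (ee u) (ee f) with hm
  set n := if (1 ∈ u.1 ↔ 1 ∈ f.1) then 2*m else 2*m+1 with hn
  have hpar : (1 ∈ u.1 ↔ 1 ∈ f.1) ↔ Even n := by
    by_cases h : (1 ∈ u.1 ↔ 1 ∈ f.1) <;>
      simp [hn, h, Nat.even_add_one, parity_simps]
  have hD : Dd (ee u) (ee f) ≤ n / 2 := by
    by_cases h : (1 ∈ u.1 ↔ 1 ∈ f.1) <;> simp [hn, h] <;> omega
  obtain ⟨pw, hpw⟩ := walk_ex hk n u f hpar hD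
  obtain ⟨qw, hqw⟩ := aut_walk g hg pw
  have h2 := walk_D qw
  rw [hqw, hpw] at h2
  rw [hf] at h2
  have : n / 2 = m := by
    by_cases h : (1 ∈ u.1 ↔ 1 ∈ f.1) <;> simp [hn, h] <;> omega
  omega

lemma inter_card_of_Dd {E E' F : Finset ℕ} (hE : E'.card = E.card) (hD : Dd E' F = Dd E F) :
    (E' ∩ F).card = (E ∩ F).card := by
  have e1 := Finset.card_sdiff_add_card_inter E F
  have e2 := Finset.card_sdiff_add_card_inter F E
  have e3 := Finset.card_sdiff_add_card_inter E' F
  have e4 := Finset.card_sdiff_add_card_inter F E'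
  have e5 : (F ∩ E).card = (E ∩ F).card := by rw [Finset.inter_comm]
  have e6 : (F ∩ E').card = (E' ∩ F).card := by rw [Finset.inter_comm]
  unfold Dd at hD
  omega

lemma hinsert (S T : Finset ℕ) (z : ℕ) (hz : z ∉ T) :
    (S ∩ insert z T).card = (S ∩ T).card + (if z ∈ S then 1 else 0) := by
  by_cases hzS : z ∈ S
  · rw [if_pos hzS]
    have h : S ∩ insert z T = insert z (S ∩ T) := by
      ext w
      simp only [Finset.mem_inter, Finset.mem_insert]
      constructor
      · rintro ⟨hwS, rfl | hwT⟩
        · exact Or.inl rfl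
        · exact Or.inr ⟨hwS, hwT⟩
      · rintro (rfl | ⟨hwS, hwT⟩)
        · exact ⟨hzS, Or.inl rfl⟩
        · exact ⟨hwS, Or.inr hwT⟩
    rw [h, Finset.card_insert_of_notMem (fun h => hz (Finset.mem_inter.mp h).2)]
  · rw [if_neg hzS, add_zero]
    congr 1
    ext w
    simp only [Finset.mem_inter, Finset.mem_insert]
    constructor
    · rintro ⟨hwS, rfl | hwT⟩
      · exact absurd hwS hzS
      · exact ⟨hwS, hwT⟩
    · rintro ⟨hwS, hwT⟩
      exact ⟨hwS, Or.inr hwT⟩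

lemma herase (S T : Finset ℕ) (z : ℕ) (hz : z ∈ T) :
    (S ∩ T.erase z).card + (if z ∈ S then 1 else 0) = (S ∩ T).card := by
  have h : insert z (T.erase z) = T := Finset.insert_erase hz
  conv_rhs => rw [← h]
  rw [hinsert S (T.erase z) z (Finset.notMem_erase _ _)]

lemma key (hk : 3 ≤ k) (g : Equiv.Perm (hsVert (2*k) k)) (hg : g ∈ graphAut (HS (2*k) k))
    (p q : hsVert (2*k) k) (hc : (p.1 ∩ q.1).card = k - 1) (h1p : 1 ∈ p.1) (h1q : 1 ∉ q.1)
    (hgp : g p = p)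
    (hNp : ∀ u, (HS (2*k) k).Adj p u → g u = u)
    (hNq : ∀ u, (HS (2*k) k).Adj q u → g u = u) : g = 1 := by
  have hk0 : 0 < k := by omega
  set A := ee p with hA
  have hAcard : A.card = k - 1 := card_ee_of_mem p h1p
  have hsub0 : p.1 ∩ q.1 ⊆ A := by
    intro x hx
    rw [Finset.mem_inter] at hx
    exact Finset.mem_erase.mpr ⟨fun h => h1q (h ▸ hx.2), hx.1⟩
  have heq0 : p.1 ∩ q.1 = A :=
    Finset.eq_of_subset_of_card_le hsub0 (by rw [hc, hAcard])
  have hAq : A ⊆ q.1 := by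
    rw [← heq0]; exact Finset.inter_subset_right
  have haex : (q.1 \ A).card = 1 := by
    rw [Finset.card_sdiff_of_subset hAq, q.2.2, hAcard]; omega
  obtain ⟨a, hafs⟩ := Finset.card_eq_one.mp haex
  have haq : a ∈ q.1 := by
    have : a ∈ q.1 \ A := hafs ▸ Finset.mem_singleton_self a
    exact (Finset.mem_sdiff.mp this).1
  have hanA : a ∉ A := by
    have : a ∈ q.1 \ A := hafs ▸ Finset.mem_singleton_self a
    exact (Finset.mem_sdiff.mp this).2
  have haIcc : a ∈ Finset.Icc 2 (2*k) := by
    have h1 := q.2.1 haq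
    have h2 : a ≠ 1 := fun h => h1q (h ▸ haq)
    simp only [Finset.mem_Icc] at h1 ⊢
    omega
  have hq1 : q.1 = insert a A := by
    apply Finset.Subset.antisymm
    · intro z hz
      by_cases hzA : z ∈ A
      · exact Finset.mem_insert_of_mem hzA
      · have : z ∈ q.1 \ A := Finset.mem_sdiff.mpr ⟨hz, hzA⟩
        rw [hafs, Finset.mem_singleton] at this
        exact Finset.mem_insert.mpr (Or.inl this)
    · intro z hz
      rcases Finset.mem_insert.mp hz with rfl | hzA
      · exact haq
      · exact hAq hzA
  -- main pointwise statement
  have main : ∀ u, g u = u := by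
    intro u
    have hlev : 1 ∈ (g u).1 ↔ 1 ∈ u.1 := by
      have := level_pres hk0 g hg p u hgp
      tauto
    have hDd : ∀ f : hsVert (2*k) k, g f = f → Dd (ee (g u)) (ee f) = Dd (ee u) (ee f) := by
      intro f hf
      have h1 := Dd_le hk0 g hg u f hf
      have hginv : g⁻¹ ∈ graphAut (HS (2*k) k) := (graphAut (HS (2*k) k)).inv_mem hg
      have hfinv : g⁻¹ f = f := by
        conv_lhs => rw [← hf]
        simp
      have h2 := Dd_le hk0 g⁻¹ hginv (g u) f hfinv
      have h3 : g⁻¹ (g u) = u := by simp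
      rw [h3] at h2
      omega
    have hEcard : (ee (g u)).card = (ee u).card := by
      by_cases h : 1 ∈ u.1
      · rw [card_ee_of_mem u h, card_ee_of_mem (g u) (hlev.mpr h)]
      · rw [card_ee_of_notMem u h, card_ee_of_notMem (g u) (fun h2 => h (hlev.mp h2))]
    have hint : ∀ f : hsVert (2*k) k, g f = f →
        ((ee (g u)) ∩ ee f).card = ((ee u) ∩ ee f).card :=
      fun f hf => inter_card_of_Dd hEcard (hDd f hf)
    set E := ee u with hE
    set E' := ee (g u) with hE'
    have hEsub : E ⊆ Finset.Icc 2 (2*k) := ee_subset u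
    have hE'sub : E' ⊆ Finset.Icc 2 (2*k) := ee_subset (g u)
    have tA : (E' ∩ A).card = (E ∩ A).card := hint p hgp
    have tX : ∀ x (hx2 : x ∈ Finset.Icc 2 (2*k)) (hxA : x ∉ A),
        (E' ∩ insert x A).card = (E ∩ insert x A).card := by
      intro x hx2 hxA
      have hfix : g (vUp p h1p x hx2 hxA) = vUp p h1p x hx2 hxA :=
        hNp _ (adj_vUp p h1p x hx2 hxA)
      have := hint _ hfix
      rwa [ee_vUp] at this
    have tY : ∀ y (hy : y ∈ q.1),
        (E' ∩ q.1.erase y).card = (E ∩ q.1.erase y).card := by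
      intro y hy
      have hfix : g (vDown q h1q y hy) = vDown q h1q y hy :=
        hNq _ (adj_vDown q h1q y hy)
      have := hint _ hfix
      rwa [ee_vDown] at this
    have hQ : (E' ∩ q.1).card = (E ∩ q.1).card := by
      rw [hq1]
      exact tX a haIcc hanA
    have hmem : ∀ z, z ∈ E ↔ z ∈ E' := by
      intro z
      by_cases hzI : z ∈ Finset.Icc 2 (2*k)
      · by_cases hzA : z ∈ A
        · have hzq : z ∈ q.1 := hAq hzA
          have h5 := tY z hzq
          have h6 := herase E' q.1 z hzq
          have h7 := herase E q.1 z hzq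
          constructor
          · intro h1
            by_contra h2
            rw [if_pos h1] at h7
            rw [if_neg h2] at h6
            omega
          · intro h2
            by_contra h1
            rw [if_neg h1] at h7
            rw [if_pos h2] at h6
            omega
        · have h5 := tX z hzI hzA
          rw [hinsert E' A z hzA, hinsert E A z hzA, tA] at h5
          constructor
          · intro h1
            by_contra h2
            rw [if_pos h1, if_neg h2] at h5
            omega
          · intro h2
            by_contra h1
            rw [if_neg h1, if_pos h2] at h5
            omega
      · constructor
        · intro h; exact absurd (hEsub h) hzI
        · intro h; exact absurd (hE'sub h) hzI
    have hEE : E' = E := Finset.ext fun z => (hmem z).symm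
    exact eq_of_ee (g u) u hlev hEE
  exact Equiv.ext main

end HSaux

/-- In `HS(2k,k)` with `k ≥ 3`, for every edge `{v,w}` the group `L_{v,w}` of automorphisms
fixing `v`, `w`, and all neighbors of `v` and of `w` pointwise is trivial. -/
theorem stmt10 (k : ℕ) (hk : 3 ≤ k) (v w : hsVert (2*k) k)
    (hadj : (HS (2*k) k).Adj v w) :
    ∀ g ∈ graphAut (HS (2*k) k),
      g v = v → g w = w →
      (∀ u, (HS (2*k) k).Adj v u → g u = u) →
      (∀ u, (HS (2*k) k).Adj w u → g u = u) →
      g = 1 := by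
  intro g hg hv hw hNv hNw
  have hadj' := hadj
  rw [HS, SimpleGraph.fromRel_adj] at hadj'
  obtain ⟨hne, h | h⟩ := hadj'
  · exact HSaux.key hk g hg v w h.1 h.2.1 h.2.2 hv hNv hNw
  · exact HSaux.key hk g hg w v h.1 h.2.1 h.2.2 hw hNw hNv
end

section
/- For k ≥ 3, the automorphism group of HS(2k,k) has order 2·(2k-1)!. -/
open Finset

namespace Finset

variable {α : Type*} [DecidableEq α]

lemma card_inter_eq_card_sub_one_iff {v w : Finset α} {a : α} (hav : a ∈ v) (haw : a ∉ w) :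
    #(v ∩ w) = #v - 1 ↔ v.erase a ⊆ w := by
  have hsub : v ∩ w ⊆ v.erase a := fun b hb =>
    mem_erase.2 ⟨fun h => haw (h ▸ (mem_inter.1 hb).2), (mem_inter.1 hb).1⟩
  rw [← card_erase_of_mem hav]
  refine ⟨fun h => ?_, fun h => ?_⟩
  · rw [← eq_of_subset_of_card_le hsub h.ge]
    exact inter_subset_right
  · rw [Subset.antisymm hsub (subset_inter (erase_subset a v) h)]

lemma card_sdiff_inter_sdiff {X v w : Finset α} (hv : v ⊆ X) (hw : w ⊆ X)
    (hcard : #v + #w = #X) : #((X \ v) ∩ (X \ w)) = #(v ∩ w) := by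
  rw [← sdiff_union_distrib, card_sdiff_of_subset (union_subset hv hw)]
  have := card_union_add_card_inter v w
  omega

lemma union_eq_of_card_eq_card_sub_one {A B C : Finset α} (hB : B ⊆ A) (hC : C ⊆ A)
    (hBC : B ≠ C) (hBcard : #B = #A - 1) (hCcard : #C = #A - 1) : B ∪ C = A := by
  have hlt : #B < #(B ∪ C) := card_lt_card <| ssubset_of_subset_of_ne subset_union_left
    fun h => hBC (eq_of_subset_of_card_le (union_eq_left.1 h.symm) (by omega)).symm
  have hle := card_le_card (union_subset hB hC)
  exact eq_of_subset_of_card_le (union_subset hB hC) (by omega)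

/-- Applied to the images of the hexagon of inclusions
`T ⊇ T \ {x} ⊆ U ⊇ T' \ {x} ⊆ T' ⊇ T ∩ T'` with `T' = T - y + z` and `U = T - x + z`. -/
lemma sdiff_eq_sdiff_of_union_eq {A₁ A₂ B₁ B₂ C D : Finset α}
    (h₁ : B₁ ∪ C = A₁) (h₂ : B₂ ∪ C = A₂) (hB₁ : B₁ ⊆ D) (hB₂ : B₂ ⊆ D)
    (hA₁ : #D ≤ #A₁) (hA₂ : #D ≤ #A₂) (hcard₁ : #(A₁ \ B₁) = 1)
    (hcard₂ : #(A₂ \ B₂) = 1) (hne : A₁ ≠ A₂) :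
    A₁ \ B₁ = A₂ \ B₂ := by
  obtain ⟨p, hp⟩ := card_eq_one.1 hcard₁
  obtain ⟨q, hq⟩ := card_eq_one.1 hcard₂
  rw [hp, hq]
  by_contra hpq
  have hC : C ⊆ D := by
    intro c hc
    by_cases hc₁ : c ∈ B₁
    · exact hB₁ hc₁
    by_cases hc₂ : c ∈ B₂
    · exact hB₂ hc₂
    have hcp : c ∈ A₁ \ B₁ := mem_sdiff.2 ⟨h₁ ▸ mem_union_right _ hc, hc₁⟩
    have hcq : c ∈ A₂ \ B₂ := mem_sdiff.2 ⟨h₂ ▸ mem_union_right _ hc, hc₂⟩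
    rw [hp, mem_singleton] at hcp
    rw [hq, mem_singleton] at hcq
    exact (hpq (by rw [← hcp, ← hcq])).elim
  have e₁ : A₁ = D := eq_of_subset_of_card_le (h₁ ▸ union_subset hB₁ hC) hA₁
  have e₂ : A₂ = D := eq_of_subset_of_card_le (h₂ ▸ union_subset hB₂ hC) hA₂
  exact hne (e₁.trans e₂.symm)

theorem induction_on_exchange {P : Finset α → Prop} {T T' : Finset α} (hcard : #T = #T')
    (hT' : P T')
    (step : ∀ U, T ∩ T' ⊆ U → U ⊆ T ∪ T' → #U = #T' →
      ∀ y ∈ U, y ∉ T' → ∀ z ∈ T', z ∉ U → P (insert z (U.erase y)) → P U) :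
    P T := by
  suffices ∀ n U, #(U \ T') = n → T ∩ T' ⊆ U → U ⊆ T ∪ T' → #U = #T' → P U from
    this _ T rfl inter_subset_left subset_union_left hcard
  intro n
  induction n with
  | zero =>
    intro U hn _ _ hU
    rw [card_eq_zero, sdiff_eq_empty_iff_subset] at hn
    rwa [eq_of_subset_of_card_le hn hU.ge]
  | succ n ih =>
    intro U hn hlo hhi hU
    obtain ⟨y, hy⟩ : (U \ T').Nonempty := card_pos.1 (by omega)
    obtain ⟨z, hz⟩ : (T' \ U).Nonempty := card_pos.1 (by rw [← card_sdiff_comm hU]; omega)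
    rw [mem_sdiff] at hy hz
    have hzU : z ∉ U.erase y := fun h => hz.2 (mem_of_mem_erase h)
    refine step U hlo hhi hU y hy.1 hy.2 z hz.1 hz.2 (ih _ ?_ ?_ ?_ ?_)
    · rw [insert_sdiff_of_mem _ hz.1, erase_sdiff_comm, card_erase_of_mem (mem_sdiff.2 hy)]
      omega
    · intro a ha
      refine mem_insert_of_mem (mem_erase.2 ⟨?_, hlo ha⟩)
      rintro rfl
      exact hy.2 (mem_inter.1 ha).2
    · exact insert_subset (mem_union_right _ hz.1) ((erase_subset _ _).trans hhi)
    · rw [card_insert_of_notMem hzU, card_erase_of_mem hy.1]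
      have : 0 < #U := card_pos.2 ⟨y, hy.1⟩
      omega

lemma apply_eq_of_image_insert_eq {β : Type*} [DecidableEq β] {f g : α → β}
    (hf : Function.Injective f) {S : Finset α} {x : α} (hx : x ∉ S)
    (hS : S.image f = S.image g) (hxS : (insert x S).image f = (insert x S).image g) :
    f x = g x := by
  have hfx : f x ∈ insert (g x) (S.image f) := by
    rw [hS, ← image_insert, ← hxS]
    exact mem_image_of_mem f (mem_insert_self x S)
  exact (mem_insert.1 hfx).resolve_right (mt hf.mem_finset_image.1 hx)

lemma erase_mem_powersetCard {Y T : Finset α} {k : ℕ} {x : α} (hT : T ∈ Y.powersetCard k)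
    (hx : x ∈ T) : T.erase x ∈ Y.powersetCard (k - 1) := by
  rw [mem_powersetCard] at hT ⊢
  exact ⟨(erase_subset x T).trans hT.1, by rw [card_erase_of_mem hx, hT.2]⟩

lemma insert_mem_powersetCard {Y S : Finset α} {k : ℕ} {y : α} (hk : 1 ≤ k)
    (hS : S ∈ Y.powersetCard (k - 1)) (hy : y ∈ Y) (hyS : y ∉ S) :
    insert y S ∈ Y.powersetCard k := by
  rw [mem_powersetCard] at hS ⊢
  refine ⟨insert_subset hy hS.1, ?_⟩
  rw [card_insert_of_notMem hyS, hS.2]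
  omega

end Finset

variable {α : Type*} [DecidableEq α]

structure IsLevelIso (Y : Finset α) (k : ℕ) (ψ φ : Finset α → Finset α) : Prop where
  mapsTo_lower : ∀ S ∈ Y.powersetCard (k - 1), ψ S ∈ Y.powersetCard (k - 1)
  mapsTo_upper : ∀ T ∈ Y.powersetCard k, φ T ∈ Y.powersetCard k
  injOn_lower : Set.InjOn ψ (Y.powersetCard (k - 1))
  injOn_upper : Set.InjOn φ (Y.powersetCard k)
  subset_iff :
    ∀ S ∈ Y.powersetCard (k - 1), ∀ T ∈ Y.powersetCard k, ψ S ⊆ φ T ↔ S ⊆ T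

namespace IsLevelIso

variable {Y : Finset α} {k : ℕ} {ψ φ : Finset α → Finset α} {T : Finset α}

lemma map_erase_subset (H : IsLevelIso Y k ψ φ) (hT : T ∈ Y.powersetCard k) {x : α}
    (hx : x ∈ T) : ψ (T.erase x) ⊆ φ T :=
  (H.subset_iff _ (erase_mem_powersetCard hT hx) T hT).2 (erase_subset x T)

lemma card_sdiff_erase (H : IsLevelIso Y k ψ φ) (hT : T ∈ Y.powersetCard k) {x : α}
    (hx : x ∈ T) : #(φ T \ ψ (T.erase x)) = 1 := by
  have hk : 0 < k := (mem_powersetCard.1 hT).2 ▸ card_pos.2 ⟨x, hx⟩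
  rw [card_sdiff_of_subset (H.map_erase_subset hT hx),
    (mem_powersetCard.1 (H.mapsTo_upper T hT)).2,
    (mem_powersetCard.1 (H.mapsTo_lower _ (erase_mem_powersetCard hT hx))).2]
  omega

lemma map_erase_union (H : IsLevelIso Y k ψ φ) (hT : T ∈ Y.powersetCard k) {x y : α}
    (hx : x ∈ T) (hy : y ∈ T) (hxy : x ≠ y) : ψ (T.erase x) ∪ ψ (T.erase y) = φ T := by
  have hxT := erase_mem_powersetCard hT hx
  have hyT := erase_mem_powersetCard hT hy
  refine union_eq_of_card_eq_card_sub_one (H.map_erase_subset hT hx)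
    (H.map_erase_subset hT hy) (fun h => ?_) ?_ ?_
  · exact notMem_erase y T (H.injOn_lower hxT hyT h ▸ mem_erase.2 ⟨hxy.symm, hy⟩)
  all_goals rw [(mem_powersetCard.1 (H.mapsTo_upper T hT)).2]
  · exact (mem_powersetCard.1 (H.mapsTo_lower _ hxT)).2
  · exact (mem_powersetCard.1 (H.mapsTo_lower _ hyT)).2

lemma sdiff_erase_eq_of_exchange (H : IsLevelIso Y k ψ φ) (hT : T ∈ Y.powersetCard k)
    {x y z : α} (hx : x ∈ T) (hy : y ∈ T) (hxy : x ≠ y) (hz : z ∈ Y) (hzT : z ∉ T) :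
    φ T \ ψ (T.erase x) = φ (insert z (T.erase y)) \ ψ ((insert z (T.erase y)).erase x) := by
  have hk : 1 ≤ k := (mem_powersetCard.1 hT).2 ▸ card_pos.2 ⟨x, hx⟩
  have hzTy : z ∉ T.erase y := fun h => hzT (mem_of_mem_erase h)
  have hzTx : z ∉ T.erase x := fun h => hzT (mem_of_mem_erase h)
  have hzx : z ≠ x := fun h => hzT (h ▸ hx)
  set T' := insert z (T.erase y)
  set U := insert z (T.erase x)
  have hT' : T' ∈ Y.powersetCard k :=
    insert_mem_powersetCard hk (erase_mem_powersetCard hT hy) hz hzTy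
  have hU : U ∈ Y.powersetCard k :=
    insert_mem_powersetCard hk (erase_mem_powersetCard hT hx) hz hzTx
  have hxT' : x ∈ T' := mem_insert_of_mem (mem_erase.2 ⟨hxy, hx⟩)
  have hT'_union : ψ (T'.erase x) ∪ ψ (T.erase y) = φ T' := by
    rw [← H.map_erase_union hT' hxT' (mem_insert_self z _) hzx.symm, erase_insert hzTy]
  have hTU : ψ (T.erase x) ⊆ φ U :=
    (H.subset_iff _ (erase_mem_powersetCard hT hx) _ hU).2 (subset_insert z _)
  have hT'U : ψ (T'.erase x) ⊆ φ U := by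
    refine (H.subset_iff _ (erase_mem_powersetCard hT' hxT') _ hU).2 ?_
    rw [erase_insert_of_ne hzx]
    exact insert_subset_insert z (erase_subset_erase x (erase_subset y T))
  have hcard {V : Finset α} (hV : V ∈ Y.powersetCard k) : #(φ V) = k :=
    (mem_powersetCard.1 (H.mapsTo_upper V hV)).2
  refine sdiff_eq_sdiff_of_union_eq (H.map_erase_union hT hx hy hxy) hT'_union hTU hT'U
    (by rw [hcard hU, hcard hT]) (by rw [hcard hU, hcard hT'])
    (H.card_sdiff_erase hT hx) (H.card_sdiff_erase hT' hxT') fun h => ?_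
  exact hzT (H.injOn_upper hT hT' h ▸ mem_insert_self z _)

lemma sdiff_erase_eq (H : IsLevelIso Y k ψ φ) {T T' : Finset α} (hT : T ∈ Y.powersetCard k)
    (hT' : T' ∈ Y.powersetCard k) {x : α} (hx : x ∈ T) (hx' : x ∈ T') :
    φ T \ ψ (T.erase x) = φ T' \ ψ (T'.erase x) := by
  rw [mem_powersetCard] at hT hT'
  refine induction_on_exchange (P := fun U => φ U \ ψ (U.erase x) = φ T' \ ψ (T'.erase x))
    (hT.2.trans hT'.2.symm) rfl ?_
  intro U hlo hhi hU y hy hyT' z hz hzU hP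
  have hUY : U ∈ Y.powersetCard k :=
    mem_powersetCard.2 ⟨hhi.trans (union_subset hT.1 hT'.1), hU.trans hT'.2⟩
  have hxy : x ≠ y := fun h => hyT' (h ▸ hx')
  rw [H.sdiff_erase_eq_of_exchange hUY (hlo (mem_inter.2 ⟨hx, hx'⟩)) hy hxy (hT'.1 hz) hzU, hP]

lemma exists_sdiff_erase_eq_singleton (H : IsLevelIso Y k ψ φ) (hk : 1 ≤ k) (hkY : k ≤ #Y)
    {x : α} (hx : x ∈ Y) :
    ∃ p, ∀ T ∈ Y.powersetCard k, x ∈ T → φ T \ ψ (T.erase x) = {p} := by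
  obtain ⟨T₀, hxT₀, hT₀Y, hT₀⟩ :=
    exists_subsuperset_card_eq (singleton_subset_iff.2 hx) (by simpa using hk) hkY
  rw [singleton_subset_iff] at hxT₀
  have hT₀' : T₀ ∈ Y.powersetCard k := mem_powersetCard.2 ⟨hT₀Y, hT₀⟩
  obtain ⟨p, hp⟩ := card_eq_one.1 (H.card_sdiff_erase hT₀' hxT₀)
  exact ⟨p, fun T hT hxT => (H.sdiff_erase_eq hT hT₀' hxT hxT₀).trans hp⟩

section PointMap

variable {π : α → α}

lemma map_erase_eq_erase (H : IsLevelIso Y k ψ φ)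
    (hπ : ∀ T ∈ Y.powersetCard k, ∀ x ∈ T, φ T \ ψ (T.erase x) = {π x})
    (hT : T ∈ Y.powersetCard k) {x : α} (hx : x ∈ T) :
    ψ (T.erase x) = (φ T).erase (π x) := by
  rw [← sdiff_singleton_eq_erase (π x), ← hπ T hT x hx,
    Finset.sdiff_sdiff_eq_self (H.map_erase_subset hT hx)]

lemma injOn_of_sdiff_erase (H : IsLevelIso Y k ψ φ)
    (hπ : ∀ T ∈ Y.powersetCard k, ∀ x ∈ T, φ T \ ψ (T.erase x) = {π x})
    (hT : T ∈ Y.powersetCard k) : Set.InjOn π T := by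
  intro x hx x' hx' h
  refine erase_injOn T hx hx' (H.injOn_lower (erase_mem_powersetCard hT hx)
    (erase_mem_powersetCard hT hx') ?_)
  rw [H.map_erase_eq_erase hπ hT hx, H.map_erase_eq_erase hπ hT hx', h]

lemma mem_of_sdiff_erase
    (hπ : ∀ T ∈ Y.powersetCard k, ∀ x ∈ T, φ T \ ψ (T.erase x) = {π x})
    (hT : T ∈ Y.powersetCard k) {x : α} (hx : x ∈ T) : π x ∈ φ T :=
  (mem_sdiff.1 (hπ T hT x hx ▸ mem_singleton_self (π x))).1

lemma upper_eq_image (H : IsLevelIso Y k ψ φ)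
    (hπ : ∀ T ∈ Y.powersetCard k, ∀ x ∈ T, φ T \ ψ (T.erase x) = {π x})
    (hT : T ∈ Y.powersetCard k) : φ T = T.image π := by
  refine (eq_of_subset_of_card_le
    (image_subset_iff.2 fun x hx => mem_of_sdiff_erase hπ hT hx) ?_).symm
  rw [card_image_of_injOn (H.injOn_of_sdiff_erase hπ hT),
    (mem_powersetCard.1 (H.mapsTo_upper T hT)).2, (mem_powersetCard.1 hT).2]

lemma lower_eq_image (H : IsLevelIso Y k ψ φ)
    (hπ : ∀ T ∈ Y.powersetCard k, ∀ x ∈ T, φ T \ ψ (T.erase x) = {π x})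
    (hk : 1 ≤ k) (hkY : k ≤ #Y) {S : Finset α} (hS : S ∈ Y.powersetCard (k - 1)) :
    ψ S = S.image π := by
  obtain ⟨y, hyY, hyS⟩ := exists_mem_notMem_of_card_lt_card
    (show #S < #Y by rw [(mem_powersetCard.1 hS).2]; omega)
  have hT : insert y S ∈ Y.powersetCard k := insert_mem_powersetCard hk hS hyY hyS
  have hπy : π y ∉ S.image π := fun h => by
    obtain ⟨s, hs, hsy⟩ := mem_image.1 h
    have := H.injOn_of_sdiff_erase hπ hT (mem_insert_of_mem hs) (mem_insert_self y S) hsy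
    exact hyS (this ▸ hs)
  calc ψ S = ψ ((insert y S).erase y) := by rw [erase_insert hyS]
    _ = S.image π := by
      rw [H.map_erase_eq_erase hπ hT (mem_insert_self y S), H.upper_eq_image hπ hT,
        image_insert, erase_insert hπy]

end PointMap

theorem exists_perm (H : IsLevelIso Y k ψ φ) (hk : 2 ≤ k) (hkY : k ≤ #Y) :
    ∃ σ : Equiv.Perm Y,
      (∀ S ∈ Y.powersetCard (k - 1), ψ S = S.image (Equiv.Perm.ofSubtype σ)) ∧
        ∀ T ∈ Y.powersetCard k, φ T = T.image (Equiv.Perm.ofSubtype σ) := by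
  obtain ⟨x₀, -⟩ : Y.Nonempty := card_pos.1 (by omega)
  have : Nonempty α := ⟨x₀⟩
  choose! π hπ using fun x (hx : x ∈ Y) =>
    H.exists_sdiff_erase_eq_singleton (by omega : 1 ≤ k) hkY hx
  replace hπ : ∀ T ∈ Y.powersetCard k, ∀ x ∈ T, φ T \ ψ (T.erase x) = {π x} :=
    fun T hT x hx => hπ x ((mem_powersetCard.1 hT).1 hx) T hT hx
  have hcover {s : Finset α} (hs : s ⊆ Y) (hs2 : #s ≤ 2) :
      ∃ T ∈ Y.powersetCard k, s ⊆ T := by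
    obtain ⟨T, hsT, hTY, hT⟩ := exists_subsuperset_card_eq hs (by omega) hkY
    exact ⟨T, mem_powersetCard.2 ⟨hTY, hT⟩, hsT⟩
  have hmaps (x : Y) : π x ∈ Y := by
    obtain ⟨T, hT, hxT⟩ := hcover (singleton_subset_iff.2 x.2) (by simp)
    exact (mem_powersetCard.1 (H.mapsTo_upper T hT)).1
      (mem_of_sdiff_erase hπ hT (singleton_subset_iff.1 hxT))
  have hinj : Function.Injective fun x : Y => (⟨π x, hmaps x⟩ : Y) := by
    intro x x' h
    obtain ⟨T, hT, hxT⟩ :=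
      hcover (insert_subset x.2 (singleton_subset_iff.2 x'.2)) card_le_two
    exact Subtype.ext (H.injOn_of_sdiff_erase hπ hT (hxT (mem_insert_self _ _))
      (hxT (mem_insert_of_mem (mem_singleton_self _))) (congrArg Subtype.val h))
  let σ : Equiv.Perm Y := Equiv.ofBijective _ (Finite.injective_iff_bijective.1 hinj)
  have hσ {U : Finset α} (hU : U ⊆ Y) : U.image (Equiv.Perm.ofSubtype σ) = U.image π :=
    image_congr fun x hx => Equiv.Perm.ofSubtype_apply_of_mem σ (hU hx)
  exact ⟨σ, fun S hS => (H.lower_eq_image hπ (by omega) hkY hS).trans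
      (hσ (mem_powersetCard.1 hS).1).symm,
    fun T hT => (H.upper_eq_image hπ hT).trans (hσ (mem_powersetCard.1 hT).1).symm⟩

end IsLevelIso

namespace SimpleGraph

variable {V : Type*}

lemma fromRel_adj_apply_iff {r : V → V → Prop} {f : V → V} (hf : Function.Injective f)
    (h : ∀ a b, r (f a) (f b) ∨ r (f b) (f a) ↔ r a b ∨ r b a) (a b : V) :
    (fromRel r).Adj (f a) (f b) ↔ (fromRel r).Adj a b := by
  simp only [fromRel_adj, hf.ne_iff, h]

lemma Reachable.iff_of_adj {G : SimpleGraph V} {P : V → Prop}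
    (hP : ∀ v w, G.Adj v w → (P v ↔ P w)) {u v : V} (h : G.Reachable u v) : P u ↔ P v := by
  rw [reachable_iff_reflTransGen] at h
  induction h with
  | refl => rfl
  | tail _ hadj ih => exact ih.trans (hP _ _ hadj)

lemma Preconnected.forall_iff_or_forall_iff_not {G : SimpleGraph V} (hG : G.Preconnected)
    {c : V → Prop} (hc : ∀ v w, G.Adj v w → (c v ↔ ¬c w)) {e : V → V}
    (he : ∀ v w, G.Adj v w → G.Adj (e v) (e w)) :
    (∀ v, c (e v) ↔ c v) ∨ ∀ v, c (e v) ↔ ¬c v := by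
  have hP (v w : V) (h : G.Adj v w) : (c (e v) ↔ c v) ↔ (c (e w) ↔ c w) := by
    have := hc v w h
    have := hc _ _ (he v w h)
    tauto
  by_cases h : ∀ v, c (e v) ↔ c v
  · exact Or.inl h
  · obtain ⟨v₀, hv₀⟩ := not_forall.1 h
    refine Or.inr fun v => ?_
    have := (hG v v₀).iff_of_adj hP
    tauto

end SimpleGraph

namespace HS

abbrev Y (n : ℕ) : Finset ℕ := Icc 2 n

variable {n k : ℕ}

lemma card_Y : #(Y n) = n - 1 := by simp

lemma Y_subset : Y n ⊆ Icc 1 n := Icc_subset_Icc_left one_le_two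

lemma one_notMem_Y : 1 ∉ Y n := by simp

lemma erase_one_subset_Y (v : hsVert n k) : v.1.erase 1 ⊆ Y n := fun a ha => by
  have := v.2.1 (mem_of_mem_erase ha)
  simp only [mem_Icc, mem_erase] at this ha ⊢
  omega

lemma one_mem_iff_not_of_adj {v w : hsVert n k} (h : (HS n k).Adj v w) :
    1 ∈ v.1 ↔ 1 ∉ w.1 := by
  rcases ((SimpleGraph.fromRel_adj _ _ _).1 h).2 with ⟨-, h₁, h₂⟩ | ⟨-, h₁, h₂⟩
  all_goals tauto

lemma adj_iff_erase_subset {v w : hsVert n k} (hv : 1 ∈ v.1) (hw : 1 ∉ w.1) :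
    (HS n k).Adj v w ↔ v.1.erase 1 ⊆ w.1 := by
  have hne : v ≠ w := fun h => hw (h ▸ hv)
  rw [HS, SimpleGraph.fromRel_adj, ← card_inter_eq_card_sub_one_iff hv hw, v.2.2]
  simp [hne, hv, hw]

lemma ext_of_erase_one {v w : hsVert n k} (hv : 1 ∈ v.1) (hw : 1 ∈ w.1)
    (h : v.1.erase 1 = w.1.erase 1) : v = w :=
  Subtype.ext (by rw [← insert_erase hv, h, insert_erase hw])

lemma erase_one_mem_powersetCard {v : hsVert n k} (h : 1 ∈ v.1) :
    v.1.erase 1 ∈ (Y n).powersetCard (k - 1) :=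
  mem_powersetCard.2 ⟨erase_one_subset_Y v, by rw [card_erase_of_mem h, v.2.2]⟩

lemma mem_powersetCard_of_one_notMem {v : hsVert n k} (h : 1 ∉ v.1) :
    v.1 ∈ (Y n).powersetCard k :=
  mem_powersetCard.2 ⟨erase_eq_of_notMem h ▸ erase_one_subset_Y v, v.2.2⟩

def ofLevel (T : Finset ℕ) (hT : T ∈ (Y n).powersetCard k) : hsVert n k :=
  ⟨T, (mem_powersetCard.1 hT).1.trans Y_subset, (mem_powersetCard.1 hT).2⟩

lemma one_notMem_ofLevel {T : Finset ℕ} (hT : T ∈ (Y n).powersetCard k) :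
    1 ∉ (ofLevel T hT).1 :=
  fun h => one_notMem_Y ((mem_powersetCard.1 hT).1 h)

def insertOne (hk : 1 ≤ k) (S : Finset ℕ) (hS : S ∈ (Y (2 * k)).powersetCard (k - 1)) :
    hsVert (2 * k) k :=
  ⟨insert 1 S, insert_subset (by simp; omega) ((mem_powersetCard.1 hS).1.trans Y_subset), by
    rw [card_insert_of_notMem fun h => one_notMem_Y ((mem_powersetCard.1 hS).1 h),
      (mem_powersetCard.1 hS).2]
    omega⟩

section insertOne

variable (hk : 1 ≤ k) {S : Finset ℕ} (hS : S ∈ (Y (2 * k)).powersetCard (k - 1))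

lemma one_mem_insertOne : 1 ∈ (insertOne hk S hS).1 := mem_insert_self 1 S

lemma erase_one_insertOne : (insertOne hk S hS).1.erase 1 = S :=
  erase_insert fun h => one_notMem_Y ((mem_powersetCard.1 hS).1 h)

lemma adj_insertOne_ofLevel_iff {T : Finset ℕ} (hT : T ∈ (Y (2 * k)).powersetCard k) :
    (HS (2 * k) k).Adj (insertOne hk S hS) (ofLevel T hT) ↔ S ⊆ T := by
  rw [adj_iff_erase_subset (one_mem_insertOne hk hS) (one_notMem_ofLevel hT),
    erase_one_insertOne]
  rfl

end insertOne

lemma insertOne_erase_one (hk : 1 ≤ k) {v : hsVert (2 * k) k} (h : 1 ∈ v.1) :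
    insertOne hk (v.1.erase 1) (erase_one_mem_powersetCard h) = v :=
  Subtype.ext (insert_erase h)

lemma reachable_ofLevel (hk : 1 ≤ k) {T T' : Finset ℕ} (hT : T ∈ (Y (2 * k)).powersetCard k)
    (hT' : T' ∈ (Y (2 * k)).powersetCard k) :
    (HS (2 * k) k).Reachable (ofLevel T hT) (ofLevel T' hT') := by
  refine induction_on_exchange (P := fun U => ∀ hU : U ∈ (Y (2 * k)).powersetCard k,
    (HS (2 * k) k).Reachable (ofLevel U hU) (ofLevel T' hT'))
    (by rw [(mem_powersetCard.1 hT).2, (mem_powersetCard.1 hT').2]) (fun _ => .refl _) ?_ hT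
  intro U _ _ _ y hy _ z hz hzU hP hU
  have hS := erase_mem_powersetCard hU hy
  have hU' : insert z (U.erase y) ∈ (Y (2 * k)).powersetCard k :=
    insert_mem_powersetCard hk hS ((mem_powersetCard.1 hT').1 hz)
      fun h => hzU (mem_of_mem_erase h)
  have h₁ := (adj_insertOne_ofLevel_iff hk hS hU).2 (erase_subset y U)
  have h₂ := (adj_insertOne_ofLevel_iff hk hS hU').2 (subset_insert z _)
  exact (h₁.symm.reachable.trans h₂.reachable).trans (hP hU')

lemma exists_reachable_ofLevel (hk : 1 ≤ k) (v : hsVert (2 * k) k) :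
    ∃ T, ∃ hT : T ∈ (Y (2 * k)).powersetCard k,
      (HS (2 * k) k).Reachable v (ofLevel T hT) := by
  by_cases h : 1 ∈ v.1
  · have hS := erase_one_mem_powersetCard h
    obtain ⟨T, hST, hTY, hT⟩ := exists_subsuperset_card_eq (n := k) (mem_powersetCard.1 hS).1
      (by rw [(mem_powersetCard.1 hS).2]; omega) (by rw [card_Y]; omega)
    have hT' : T ∈ (Y (2 * k)).powersetCard k := mem_powersetCard.2 ⟨hTY, hT⟩
    refine ⟨T, hT', ?_⟩
    rw [← insertOne_erase_one hk h]
    exact ((adj_insertOne_ofLevel_iff hk hS hT').2 hST).reachable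
  · exact ⟨v.1, mem_powersetCard_of_one_notMem h, .refl _⟩

lemma preconnected (hk : 1 ≤ k) : (HS (2 * k) k).Preconnected := fun v w => by
  obtain ⟨T, hT, hv⟩ := exists_reachable_ofLevel hk v
  obtain ⟨T', hT', hw⟩ := exists_reachable_ofLevel hk w
  exact (hv.trans (reachable_ofLevel hk hT hT')).trans hw.symm

def compl (k : ℕ) : Equiv.Perm (hsVert (2 * k) k) :=
  Function.Involutive.toPerm (fun v => ⟨Icc 1 (2 * k) \ v.1, sdiff_subset, by
      rw [card_sdiff_of_subset v.2.1, Nat.card_Icc, v.2.2]; omega⟩)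
    fun v => Subtype.ext (Finset.sdiff_sdiff_eq_self v.2.1)

lemma compl_mul_compl : compl k * compl k = 1 :=
  Equiv.ext fun v => Subtype.ext (Finset.sdiff_sdiff_eq_self v.2.1)

lemma one_mem_compl_iff (hk : 1 ≤ k) (v : hsVert (2 * k) k) :
    1 ∈ (compl k v).1 ↔ 1 ∉ v.1 := by
  change 1 ∈ Icc 1 (2 * k) \ v.1 ↔ _
  rw [mem_sdiff, and_iff_right (by simp; omega)]

lemma compl_mem_graphAut (hk : 1 ≤ k) : compl k ∈ graphAut (HS (2 * k) k) := by
  refine SimpleGraph.fromRel_adj_apply_iff (compl k).injective fun v w => ?_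
  have hcard : #((compl k v).1 ∩ (compl k w).1) = #(v.1 ∩ w.1) :=
    card_sdiff_inter_sdiff v.2.1 w.2.1 (by rw [v.2.2, w.2.2, Nat.card_Icc]; omega)
  rw [hcard, inter_comm (compl k w).1, hcard, inter_comm w.1, one_mem_compl_iff hk,
    one_mem_compl_iff hk]
  tauto

lemma ofSubtype_one (σ : Equiv.Perm (Y n)) : Equiv.Perm.ofSubtype σ 1 = 1 :=
  Equiv.Perm.ofSubtype_apply_of_not_mem σ one_notMem_Y

lemma ofSubtype_mem_Icc_iff (σ : Equiv.Perm (Y n)) (a : ℕ) :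
    Equiv.Perm.ofSubtype σ a ∈ Icc 1 n ↔ a ∈ Icc 1 n := by
  by_cases ha : a ∈ Y n
  · rw [Equiv.Perm.ofSubtype_apply_of_mem σ ha]
    exact iff_of_true (Y_subset (σ ⟨a, ha⟩).2) (Y_subset ha)
  · rw [Equiv.Perm.ofSubtype_apply_of_not_mem σ ha]

lemma image_subset_Icc_iff (σ : Equiv.Perm (Y n)) (v : Finset ℕ) :
    v.image (Equiv.Perm.ofSubtype σ) ⊆ Icc 1 n ↔ v ⊆ Icc 1 n := by
  simp only [image_subset_iff, ofSubtype_mem_Icc_iff]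
  rfl

def liftPerm (σ : Equiv.Perm (Y n)) : Equiv.Perm (hsVert n k) :=
  (Equiv.finsetCongr (Equiv.Perm.ofSubtype σ)).subtypeEquiv fun v => by
    simp only [Equiv.finsetCongr_apply, map_eq_image, Equiv.coe_toEmbedding,
      card_image_of_injective _ (Equiv.injective _), image_subset_Icc_iff]

lemma liftPerm_val (σ : Equiv.Perm (Y n)) (v : hsVert n k) :
    (liftPerm σ v).1 = v.1.image (Equiv.Perm.ofSubtype σ) :=
  map_eq_image _ _

lemma one_mem_liftPerm_iff (σ : Equiv.Perm (Y n)) (v : hsVert n k) :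
    1 ∈ (liftPerm σ v).1 ↔ 1 ∈ v.1 := by
  rw [liftPerm_val]
  simpa only [ofSubtype_one] using
    (Equiv.Perm.ofSubtype σ).injective.mem_finset_image (s := v.1) (a := 1)

lemma liftPerm_val_erase_one (σ : Equiv.Perm (Y n)) (v : hsVert n k) :
    (liftPerm σ v).1.erase 1 = (v.1.erase 1).image (Equiv.Perm.ofSubtype σ) := by
  rw [liftPerm_val, image_erase (Equiv.injective _), ofSubtype_one]

lemma liftPerm_mem_graphAut (σ : Equiv.Perm (Y n)) : liftPerm σ ∈ graphAut (HS n k) := by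
  refine SimpleGraph.fromRel_adj_apply_iff (liftPerm σ).injective fun v w => ?_
  have hinter (v w : hsVert n k) : #((liftPerm σ v).1 ∩ (liftPerm σ w).1) = #(v.1 ∩ w.1) := by
    rw [liftPerm_val, liftPerm_val, ← image_inter _ _ (Equiv.injective _),
      card_image_of_injective _ (Equiv.injective _)]
  simp only [hinter, one_mem_liftPerm_iff]

lemma liftPerm_injective (hk : 1 ≤ k) :
    Function.Injective (liftPerm : Equiv.Perm (Y (2 * k)) → Equiv.Perm (hsVert (2 * k) k)) := by
  intro σ σ' h
  ext x
  obtain ⟨S, -, hSY, hS⟩ := exists_subsuperset_card_eq (n := k - 1)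
    (empty_subset ((Y (2 * k)).erase x)) (by simp) (by rw [card_erase_of_mem x.2, card_Y]; omega)
  have hxS : (x : ℕ) ∉ S := fun h => (notMem_erase _ _) (hSY h)
  have hS' : S ∈ (Y (2 * k)).powersetCard (k - 1) :=
    mem_powersetCard.2 ⟨hSY.trans (erase_subset _ _), hS⟩
  have hT := insert_mem_powersetCard hk hS' x.2 hxS
  have himage_S := congrArg (fun e => (e (insertOne hk S hS')).1.erase 1) h
  have himage_T := congrArg (fun e => (e (ofLevel _ hT)).1) h
  simp only [liftPerm_val_erase_one, erase_one_insertOne] at himage_S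
  simp only [liftPerm_val] at himage_T
  have := apply_eq_of_image_insert_eq (Equiv.injective _) hxS himage_S himage_T
  rwa [Equiv.Perm.ofSubtype_apply_coe, Equiv.Perm.ofSubtype_apply_coe] at this

def lowerMap (hk : 1 ≤ k) (e : Equiv.Perm (hsVert (2 * k) k)) (S : Finset ℕ) : Finset ℕ :=
  if hS : S ∈ (Y (2 * k)).powersetCard (k - 1) then (e (insertOne hk S hS)).1.erase 1 else ∅

def upperMap (e : Equiv.Perm (hsVert n k)) (T : Finset ℕ) : Finset ℕ :=
  if hT : T ∈ (Y n).powersetCard k then (e (ofLevel T hT)).1 else ∅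

lemma isLevelIso (hk : 1 ≤ k) {e : Equiv.Perm (hsVert (2 * k) k)}
    (he : e ∈ graphAut (HS (2 * k) k)) (hside : ∀ v, 1 ∈ (e v).1 ↔ 1 ∈ v.1) :
    IsLevelIso (Y (2 * k)) k (lowerMap hk e) (upperMap e) where
  mapsTo_lower S hS := by
    rw [lowerMap, dif_pos hS]
    exact erase_one_mem_powersetCard ((hside _).2 (one_mem_insertOne hk hS))
  mapsTo_upper T hT := by
    rw [upperMap, dif_pos hT]
    exact mem_powersetCard_of_one_notMem (mt (hside _).1 (one_notMem_ofLevel hT))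
  injOn_lower S hS S' hS' h := by
    simp only [lowerMap, dif_pos (mem_coe.1 hS), dif_pos (mem_coe.1 hS')] at h
    have := e.injective (ext_of_erase_one ((hside _).2 (one_mem_insertOne hk _))
      ((hside _).2 (one_mem_insertOne hk _)) h)
    rw [← erase_one_insertOne hk (mem_coe.1 hS), ← erase_one_insertOne hk (mem_coe.1 hS'), this]
  injOn_upper T hT T' hT' h := by
    simp only [upperMap, dif_pos (mem_coe.1 hT), dif_pos (mem_coe.1 hT')] at h
    exact congrArg Subtype.val (e.injective (Subtype.ext h))
  subset_iff S hS T hT := by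
    rw [lowerMap, upperMap, dif_pos hS, dif_pos hT, ← adj_iff_erase_subset
      ((hside _).2 (one_mem_insertOne hk hS)) (mt (hside _).1 (one_notMem_ofLevel hT)), he,
      adj_insertOne_ofLevel_iff]

lemma exists_eq_liftPerm (hk : 2 ≤ k) {e : Equiv.Perm (hsVert (2 * k) k)}
    (he : e ∈ graphAut (HS (2 * k) k)) (hside : ∀ v, 1 ∈ (e v).1 ↔ 1 ∈ v.1) :
    ∃ σ : Equiv.Perm (Y (2 * k)), e = liftPerm σ := by
  obtain ⟨σ, hlower, hupper⟩ :=
    (isLevelIso (by omega) he hside).exists_perm hk (by rw [card_Y]; omega)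
  refine ⟨σ, Equiv.ext fun v => Subtype.ext ?_⟩
  by_cases h : 1 ∈ v.1
  · have hS := erase_one_mem_powersetCard h
    have := hlower _ hS
    rw [lowerMap, dif_pos hS, insertOne_erase_one _ h, ← liftPerm_val_erase_one σ v] at this
    rw [← insert_erase ((hside v).2 h), this, insert_erase ((one_mem_liftPerm_iff σ v).2 h)]
  · have := hupper _ (mem_powersetCard_of_one_notMem h)
    rwa [upperMap, dif_pos (mem_powersetCard_of_one_notMem h), ← liftPerm_val] at this

def autOf (hk : 1 ≤ k) (p : Equiv.Perm (Y (2 * k)) × Bool) : graphAut (HS (2 * k) k) :=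
  ⟨cond p.2 (compl k) 1 * liftPerm p.1,
    mul_mem (by cases p.2; exacts [one_mem _, compl_mem_graphAut hk]) (liftPerm_mem_graphAut _)⟩

lemma one_mem_autOf_iff (hk : 1 ≤ k) (σ : Equiv.Perm (Y (2 * k))) (b : Bool)
    (v : hsVert (2 * k) k) :
    1 ∈ ((autOf hk (σ, b) : Equiv.Perm _) v).1 ↔ (1 ∈ v.1 ↔ b = false) := by
  cases b
  · simp [autOf, one_mem_liftPerm_iff]
  · simp [autOf, one_mem_compl_iff hk, one_mem_liftPerm_iff]

lemma autOf_injective (hk : 1 ≤ k) : Function.Injective (autOf hk) := by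
  rintro ⟨σ, b⟩ ⟨σ', b'⟩ h
  obtain ⟨T, -, hTY, hT⟩ := exists_subsuperset_card_eq (n := k) (empty_subset (Y (2 * k)))
    (by simp) (by rw [card_Y]; omega)
  have hv := one_mem_autOf_iff hk σ b (ofLevel T (mem_powersetCard.2 ⟨hTY, hT⟩))
  rw [h, one_mem_autOf_iff] at hv
  obtain rfl : b = b' := by cases b <;> cases b' <;> simp_all
  exact Prod.ext (liftPerm_injective hk (mul_left_cancel (congrArg Subtype.val h))) rfl

lemma autOf_surjective (hk : 2 ≤ k) : Function.Surjective (autOf (k := k) (by omega)) := by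
  rintro ⟨e, he⟩
  rcases (preconnected (by omega)).forall_iff_or_forall_iff_not (c := fun v => 1 ∈ v.1)
    (fun v w h => one_mem_iff_not_of_adj h) (fun v w h => (he v w).2 h) with hside | hswap
  · obtain ⟨σ, rfl⟩ := exists_eq_liftPerm hk he hside
    exact ⟨(σ, false), Subtype.ext (one_mul _)⟩
  · have hside (v : hsVert (2 * k) k) : 1 ∈ ((compl k * e) v).1 ↔ 1 ∈ v.1 := by
      rw [Equiv.Perm.mul_apply, one_mem_compl_iff (by omega), hswap, not_not]
    obtain ⟨σ, hσ⟩ := exists_eq_liftPerm hk (mul_mem (compl_mem_graphAut (by omega)) he) hside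
    refine ⟨(σ, true), Subtype.ext ?_⟩
    change compl k * liftPerm σ = e
    rw [← hσ, ← mul_assoc, compl_mul_compl, one_mul]

end HS

/-- For `k ≥ 3`, the automorphism group of `HS(2k,k)` has order `2·(2k-1)!`. -/
theorem stmt11 (k : ℕ) (hk : 3 ≤ k) :
    Nat.card ↥(graphAut (HS (2*k) k)) = 2 * Nat.factorial (2*k - 1) := by
  have hbij : Function.Bijective (HS.autOf (k := k) (by omega)) :=
    ⟨HS.autOf_injective _, HS.autOf_surjective (by omega)⟩
  rw [← Nat.card_eq_of_bijective _ hbij, Nat.card_prod, Nat.card_perm, Nat.card_eq_finsetCard,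
    HS.card_Y, Nat.card_eq_fintype_card, Fintype.card_bool, mul_comm]
end

section
/- The girth of HS(2k,k) is 6 for k ≥ 3: the graph contains a 6-cycle, is bipartite (so has no odd cycles), and contains no 4-cycle. -/
lemma hs_adj {n k : ℕ} {v w : hsVert n k} (h : (HS n k).Adj v w) :
    (v.1 ∩ w.1).card = k - 1 ∧ (1 ∈ v.1 ↔ 1 ∉ w.1) := by
  rcases h with ⟨hne, ⟨hc, h1, h2⟩ | ⟨hc, h1, h2⟩⟩
  · exact ⟨hc, by tauto⟩
  · rw [Finset.inter_comm] at hc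
    exact ⟨hc, by tauto⟩

lemma sub_insert {k : ℕ} (hk : 1 ≤ k) {x y : Finset ℕ} (cx : x.card = k) (cy : y.card = k)
    (hi : (x ∩ y).card = k - 1) (h1 : 1 ∈ x) (h2 : 1 ∉ y) : x ⊆ insert 1 y := by
  have hd : (x \ y).card = 1 := by
    have := Finset.card_inter_add_card_sdiff x y
    omega
  obtain ⟨a, ha⟩ := Finset.card_eq_one.1 hd
  have h1d : 1 ∈ x \ y := Finset.mem_sdiff.2 ⟨h1, h2⟩
  rw [ha, Finset.mem_singleton] at h1d
  intro z hz
  by_cases hzy : z ∈ y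
  · exact Finset.mem_insert_of_mem hzy
  · have : z ∈ x \ y := Finset.mem_sdiff.2 ⟨hz, hzy⟩
    rw [ha, Finset.mem_singleton] at this
    rw [this, ← h1d]
    exact Finset.mem_insert_self _ _

lemma no4 {k : ℕ} (hk : 1 ≤ k) {a b c d : Finset ℕ} (hac : a ≠ c) (hbd : b ≠ d)
    (ca : a.card = k) (cb : b.card = k) (cc : c.card = k) (cd : d.card = k)
    (h1a : 1 ∈ a) (h1b : 1 ∉ b) (h1c : 1 ∈ c) (h1d : 1 ∉ d)
    (iab : (a ∩ b).card = k - 1) (icb : (c ∩ b).card = k - 1)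
    (icd : (c ∩ d).card = k - 1) (iad : (a ∩ d).card = k - 1) : False := by
  have s1 := sub_insert hk ca cb iab h1a h1b
  have s2 := sub_insert hk cc cb icb h1c h1b
  have s3 := sub_insert hk cc cd icd h1c h1d
  have s4 := sub_insert hk ca cd iad h1a h1d
  have hsub : a ∪ c ⊆ insert 1 (b ∩ d) := by
    intro z hz
    rcases Finset.mem_union.1 hz with h | h
    · rcases Finset.mem_insert.1 (s1 h) with h' | h'
      · exact h' ▸ Finset.mem_insert_self _ _
      · rcases Finset.mem_insert.1 (s4 h) with h'' | h''
        · exact h'' ▸ Finset.mem_insert_self _ _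
        · exact Finset.mem_insert_of_mem (Finset.mem_inter.2 ⟨h', h''⟩)
    · rcases Finset.mem_insert.1 (s2 h) with h' | h'
      · exact h' ▸ Finset.mem_insert_self _ _
      · rcases Finset.mem_insert.1 (s3 h) with h'' | h''
        · exact h'' ▸ Finset.mem_insert_self _ _
        · exact Finset.mem_insert_of_mem (Finset.mem_inter.2 ⟨h', h''⟩)
  have hlt : k + 1 ≤ (a ∪ c).card := by
    have : ¬ c ⊆ a := fun h => hac (Finset.eq_of_subset_of_card_le h (by omega)).symm
    obtain ⟨x, hxc, hxa⟩ := Finset.not_subset.1 this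
    have : insert x a ⊆ a ∪ c := by
      intro z hz
      rcases Finset.mem_insert.1 hz with h | h
      · exact Finset.mem_union_right _ (h ▸ hxc)
      · exact Finset.mem_union_left _ h
    calc k + 1 = (insert x a).card := by rw [Finset.card_insert_of_notMem hxa, ca]
      _ ≤ _ := Finset.card_le_card this
  have h2 : k ≤ (b ∩ d).card := by
    have := Finset.card_le_card hsub
    have := Finset.card_insert_le 1 (b ∩ d)
    omega
  have hb : b ∩ d = b := Finset.eq_of_subset_of_card_le Finset.inter_subset_left (by omega)
  have hd' : b ∩ d = d := Finset.eq_of_subset_of_card_le Finset.inter_subset_right (by omega)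
  exact hbd (hb ▸ hd')

lemma hs_parity {n k : ℕ} : ∀ {u v : hsVert n k} (p : (HS n k).Walk u v),
    (Even p.length ↔ (1 ∈ u.1 ↔ 1 ∈ v.1)) := by
  intro u v p
  induction p with
  | nil => simp
  | cons h p ih =>
    have := (hs_adj h).2
    rw [SimpleGraph.Walk.length_cons, Nat.even_add_one, ih]
    tauto

lemma hs_no4cycle {k : ℕ} (hk : 3 ≤ k) {a : hsVert (2*k) k} (w : (HS (2*k) k).Walk a a)
    (hw : w.IsCycle) : w.length ≠ 4 := by
  intro hlen
  cases w with
  | nil => simp at hlen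
  | cons hab p =>
    rename_i b
    cases p with
    | nil => simp at hlen
    | cons hbc p =>
      rename_i c
      cases p with
      | nil => simp at hlen
      | cons hcd p =>
        rename_i d
        cases p with
        | nil => simp at hlen
        | cons hde p =>
          rename_i e
          cases p with
          | cons h p => simp [SimpleGraph.Walk.length_cons] at hlen
          | nil =>
            -- e = a
            rw [SimpleGraph.Walk.isCycle_def] at hw
            have hnd := hw.2.2
            simp [SimpleGraph.Walk.support_cons] at hnd
            obtain ⟨⟨hbc', hbd', hba'⟩, ⟨hcd', hca'⟩, hda'⟩ := hnd
            obtain ⟨iab, pab⟩ := hs_adj hab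
            obtain ⟨ibc, pbc⟩ := hs_adj hbc
            obtain ⟨icd, pcd⟩ := hs_adj hcd
            obtain ⟨ida, pda⟩ := hs_adj hde
            have hk1 : 1 ≤ k := by omega
            have hane : a.1 ≠ c.1 := fun h => hca' (Subtype.ext h.symm)
            have hbne : b.1 ≠ d.1 := fun h => hbd' (Subtype.ext h)
            by_cases h1 : 1 ∈ a.1
            · have h1b : 1 ∉ b.1 := pab.1 h1
              have h1c : 1 ∈ c.1 := by tauto
              have h1d : 1 ∉ d.1 := pcd.1 h1c
              exact no4 hk1 hane hbne a.2.2 b.2.2 c.2.2 d.2.2 h1 h1b h1c h1d iab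
                (by rwa [Finset.inter_comm] at ibc) icd (by rwa [Finset.inter_comm] at ida)
            · have h1b : 1 ∈ b.1 := by tauto
              have h1c : 1 ∉ c.1 := by tauto
              have h1d : 1 ∈ d.1 := by tauto
              exact no4 hk1 (fun h => hbd' (Subtype.ext h)) (fun h => hca' (Subtype.ext h))
                b.2.2 c.2.2 d.2.2 a.2.2 h1b h1c h1d h1 ibc
                (by rwa [Finset.inter_comm] at icd) ida (by rwa [Finset.inter_comm] at iab)

lemma hs_adj_mk {n k : ℕ} {v w : hsVert n k} {y : ℕ} (A : Finset ℕ)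
    (hv : v.1 = insert 1 A) (hw : w.1 = insert y A) (hyA : y ∉ A) (h1A : 1 ∉ A)
    (hy1 : y ≠ 1) (hA : A.card = k - 1) : (HS n k).Adj v w := by
  have h1w : 1 ∉ w.1 := by
    rw [hw, Finset.mem_insert]
    push_neg
    exact ⟨fun h => hy1 h.symm, h1A⟩
  have h1v : 1 ∈ v.1 := by rw [hv]; exact Finset.mem_insert_self _ _
  constructor
  · exact fun h => h1w (h ▸ h1v)
  · left
    refine ⟨?_, h1v, h1w⟩
    rw [hv, hw, Finset.insert_inter_of_notMem
      (by simp only [Finset.mem_insert]; push_neg; exact ⟨fun h => hy1 h.symm, h1A⟩),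
      Finset.inter_comm, Finset.insert_inter_of_notMem hyA, Finset.inter_self]
    exact hA

lemma vne {n k : ℕ} {v w : hsVert n k} (e : ℕ) (h1 : e ∈ v.1) (h2 : e ∉ w.1) : v ≠ w :=
  fun h => h2 (h ▸ h1)

set_option maxHeartbeats 1000000 in
/-- For `k ≥ 3`, the girth of `HS(2k,k)` is `6`. -/
theorem stmt14 (k : ℕ) (hk : 3 ≤ k) :
    (HS (2*k) k).girth = 6 := by
  have hTmem : ∀ z : ℕ, z ∈ Finset.Icc 4 (k+1) ↔ 4 ≤ z ∧ z ≤ k + 1 := fun z => Finset.mem_Icc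
  set T : Finset ℕ := Finset.Icc 4 (k+1) with hT
  have h1T : (1:ℕ) ∉ T := by simp [hTmem]
  have h2T : (2:ℕ) ∉ T := by simp [hTmem]
  have h3T : (3:ℕ) ∉ T := by simp [hTmem]
  have hmT : 2*k ∉ T := by simp [hTmem]; omega
  have hTcard : T.card = k - 2 := by rw [hT, Nat.card_Icc]; omega
  have mk : ∀ x y : ℕ, x ≠ y → x ∉ T → y ∉ T → 1 ≤ x → x ≤ 2*k → 1 ≤ y → y ≤ 2*k →
      (insert x (insert y T) ⊆ Finset.Icc 1 (2*k) ∧ (insert x (insert y T)).card = k) := by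
    intro x y hxy hxT hyT hx1 hx2 hy1 hy2
    constructor
    · intro z hz
      simp only [Finset.mem_insert, hTmem, Finset.mem_Icc] at hz ⊢
      rcases hz with h | h | h <;> omega
    · rw [Finset.card_insert_of_notMem (by simp [hxy, hxT]),
        Finset.card_insert_of_notMem hyT, hTcard]
      omega
  have Acard : ∀ z : ℕ, z ∉ T → (insert z T).card = k - 1 := by
    intro z hz
    rw [Finset.card_insert_of_notMem hz, hTcard]; omega
  let v0 : hsVert (2*k) k := ⟨insert 1 (insert 2 T), mk 1 2 (by omega) h1T h2T (by omega) (by omega) (by omega) (by omega)⟩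
  let v1 : hsVert (2*k) k := ⟨insert 3 (insert 2 T), mk 3 2 (by omega) h3T h2T (by omega) (by omega) (by omega) (by omega)⟩
  let v2 : hsVert (2*k) k := ⟨insert 1 (insert 3 T), mk 1 3 (by omega) h1T h3T (by omega) (by omega) (by omega) (by omega)⟩
  let v3 : hsVert (2*k) k := ⟨insert (2*k) (insert 3 T), mk (2*k) 3 (by omega) hmT h3T (by omega) (by omega) (by omega) (by omega)⟩
  let v4 : hsVert (2*k) k := ⟨insert 1 (insert (2*k) T), mk 1 (2*k) (by omega) h1T hmT (by omega) (by omega) (by omega) (by omega)⟩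
  let v5 : hsVert (2*k) k := ⟨insert 2 (insert (2*k) T), mk 2 (2*k) (by omega) h2T hmT (by omega) (by omega) (by omega) (by omega)⟩
  -- adjacencies
  have a01 : (HS (2*k) k).Adj v0 v1 :=
    hs_adj_mk (y := 3) (insert 2 T) rfl rfl (by simp [h3T]) (by simp [h1T]) (by omega)
      (Acard 2 h2T)
  have a12 : (HS (2*k) k).Adj v1 v2 :=
    (hs_adj_mk (y := 2) (insert 3 T) rfl (Finset.insert_comm 3 2 T ▸ rfl : v1.1 = insert 2 (insert 3 T))
      (by simp [h2T]) (by simp [h1T]) (by omega) (Acard 3 h3T)).symm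
  have a23 : (HS (2*k) k).Adj v2 v3 :=
    hs_adj_mk (y := 2*k) (insert 3 T) rfl rfl (by simp [hmT]; omega) (by simp [h1T]) (by omega)
      (Acard 3 h3T)
  have a34 : (HS (2*k) k).Adj v3 v4 :=
    (hs_adj_mk (y := 3) (insert (2*k) T) rfl
      (Finset.insert_comm (2*k) 3 T ▸ rfl : v3.1 = insert 3 (insert (2*k) T))
      (by simp [h3T]; omega) (by simp [h1T]; omega) (by omega) (Acard (2*k) hmT)).symm
  have a45 : (HS (2*k) k).Adj v4 v5 :=
    hs_adj_mk (y := 2) (insert (2*k) T) rfl rfl (by simp [h2T]; omega) (by simp [h1T]; omega)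
      (by omega) (Acard (2*k) hmT)
  have a50 : (HS (2*k) k).Adj v5 v0 :=
    (hs_adj_mk (y := 2*k) (insert 2 T) rfl
      (Finset.insert_comm 2 (2*k) T ▸ rfl : v5.1 = insert (2*k) (insert 2 T))
      (by simp [hmT]; omega) (by simp [h1T]) (by omega) (Acard 2 h2T)).symm
  -- distinctness
  have n01 : v0 ≠ v1 := vne 1 (show (1:ℕ) ∈ insert 1 (insert 2 T) by simp)
    (show (1:ℕ) ∉ insert 3 (insert 2 T) by simp [h1T])
  have n02 : v0 ≠ v2 := vne 2 (show (2:ℕ) ∈ insert 1 (insert 2 T) by simp)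
    (show (2:ℕ) ∉ insert 1 (insert 3 T) by simp [h2T])
  have n03 : v0 ≠ v3 := vne 1 (show (1:ℕ) ∈ insert 1 (insert 2 T) by simp)
    (show (1:ℕ) ∉ insert (2*k) (insert 3 T) by simp [h1T]; omega)
  have n04 : v0 ≠ v4 := vne 2 (show (2:ℕ) ∈ insert 1 (insert 2 T) by simp)
    (show (2:ℕ) ∉ insert 1 (insert (2*k) T) by simp [h2T]; omega)
  have n05 : v0 ≠ v5 := vne 1 (show (1:ℕ) ∈ insert 1 (insert 2 T) by simp)
    (show (1:ℕ) ∉ insert 2 (insert (2*k) T) by simp [h1T]; omega)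
  have n12 : v1 ≠ v2 := vne 2 (show (2:ℕ) ∈ insert 3 (insert 2 T) by simp)
    (show (2:ℕ) ∉ insert 1 (insert 3 T) by simp [h2T])
  have n13 : v1 ≠ v3 := vne 2 (show (2:ℕ) ∈ insert 3 (insert 2 T) by simp)
    (show (2:ℕ) ∉ insert (2*k) (insert 3 T) by simp [h2T]; omega)
  have n14 : v1 ≠ v4 := vne 3 (show (3:ℕ) ∈ insert 3 (insert 2 T) by simp)
    (show (3:ℕ) ∉ insert 1 (insert (2*k) T) by simp [h3T]; omega)
  have n15 : v1 ≠ v5 := vne 3 (show (3:ℕ) ∈ insert 3 (insert 2 T) by simp)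
    (show (3:ℕ) ∉ insert 2 (insert (2*k) T) by simp [h3T]; omega)
  have n23 : v2 ≠ v3 := vne 1 (show (1:ℕ) ∈ insert 1 (insert 3 T) by simp)
    (show (1:ℕ) ∉ insert (2*k) (insert 3 T) by simp [h1T]; omega)
  have n24 : v2 ≠ v4 := vne 3 (show (3:ℕ) ∈ insert 1 (insert 3 T) by simp)
    (show (3:ℕ) ∉ insert 1 (insert (2*k) T) by simp [h3T]; omega)
  have n25 : v2 ≠ v5 := vne 1 (show (1:ℕ) ∈ insert 1 (insert 3 T) by simp)
    (show (1:ℕ) ∉ insert 2 (insert (2*k) T) by simp [h1T]; omega)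
  have n34 : v3 ≠ v4 := vne 3 (show (3:ℕ) ∈ insert (2*k) (insert 3 T) by simp)
    (show (3:ℕ) ∉ insert 1 (insert (2*k) T) by simp [h3T]; omega)
  have n35 : v3 ≠ v5 := vne 3 (show (3:ℕ) ∈ insert (2*k) (insert 3 T) by simp)
    (show (3:ℕ) ∉ insert 2 (insert (2*k) T) by simp [h3T]; omega)
  have n45 : v4 ≠ v5 := vne 1 (show (1:ℕ) ∈ insert 1 (insert (2*k) T) by simp)
    (show (1:ℕ) ∉ insert 2 (insert (2*k) T) by simp [h1T]; omega)
  -- the 6-cycle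
  let W : (HS (2*k) k).Walk v0 v0 :=
    .cons a01 (.cons a12 (.cons a23 (.cons a34 (.cons a45 (.cons a50 .nil)))))
  have hWlen : W.length = 6 := rfl
  have hedges : W.edges = [s(v0,v1), s(v1,v2), s(v2,v3), s(v3,v4), s(v4,v5), s(v5,v0)] := rfl
  have hsupp : W.support = [v0, v1, v2, v3, v4, v5, v0] := rfl
  have hWcyc : W.IsCycle := by
    rw [SimpleGraph.Walk.isCycle_def]
    refine ⟨?_, ?_, ?_⟩
    · rw [SimpleGraph.Walk.isTrail_def, hedges]
      simp [List.nodup_cons, Sym2.eq_iff, n01, n02, n03, n04, n05, n12, n13, n14, n15,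
        n23, n24, n25, n34, n35, n45, n01.symm, n02.symm, n03.symm, n04.symm, n05.symm,
        n12.symm, n13.symm, n14.symm, n15.symm, n23.symm, n24.symm, n25.symm, n34.symm,
        n35.symm, n45.symm]
    · simp only [W]
      exact fun h => by simpa using congrArg SimpleGraph.Walk.length h
    · rw [hsupp]
      simp [List.nodup_cons, n01, n02, n03, n04, n05, n12, n13, n14, n15,
        n23, n24, n25, n34, n35, n45, n01.symm, n02.symm, n03.symm, n04.symm, n05.symm,
        n12.symm, n13.symm, n14.symm, n15.symm, n23.symm, n24.symm, n25.symm, n34.symm,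
        n35.symm, n45.symm]
  have hub : (HS (2*k) k).egirth ≤ 6 := by
    calc (HS (2*k) k).egirth ≤ (W.length : ℕ∞) :=
          iInf_le_of_le v0 (iInf_le_of_le W (iInf_le _ hWcyc))
      _ = 6 := by rw [hWlen]; rfl
  have hlb : (6 : ℕ∞) ≤ (HS (2*k) k).egirth := by
    rw [SimpleGraph.le_egirth]
    intro a w hw
    have he : Even w.length := (hs_parity w).2 Iff.rfl
    have h3 := hw.three_le_length
    have h4 := hs_no4cycle hk w hw
    obtain ⟨j, hj⟩ := he
    have h6 : 6 ≤ w.length := by omega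
    exact_mod_cast h6
  have heg : (HS (2*k) k).egirth = 6 := le_antisymm hub hlb
  rw [SimpleGraph.girth, heg]
  rfl
end
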